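/- arXiv:math/0507434 — 4 statements merged into one kernel-verified Lean document; each statement's English description precedes it below -/
import Mathlib

section
/- The Robbins–Siegmund test for the Gamma shape parameter has power one: for every θ > 0 with θ ≠ θ₀ and every b > 0, if X₁, X₂, … are i.i.d. Gamma(θ,1) then P_θ(τ_b < ∞) = 1 (indeed Λ_n → ∞ almost surely under P_θ). -/
/-!
Taking logarithms, `log Λ_n = ∑_{i ≤ n} ((θ_i - θ₀) log X_i - (log Γ(θ_i) - log Γ(θ₀)))`.
By the strong law of large numbers `θ_n → θ` almost surely and the Cesàro means of `log X_i`
and `|log X_i|` converge, so `(log Λ_n) / n` tends to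
`K = (θ - θ₀) E_θ[log X] - (log Γ(θ) - log Γ(θ₀)) = KL(Gamma(θ, 1) ‖ Gamma(θ₀, 1))`.
Gibbs' inequality makes `K > 0` when `θ ≠ θ₀`, hence
`Λ_n → ∞` and `τ_b < ∞` almost surely.
-/

open MeasureTheory ProbabilityTheory Filter

noncomputable section

/-- The Gamma(θ,1) density. -/
def gam (θ x : ℝ) : ℝ := gammaPDFReal θ 1 x

open Real Set Asymptotics Topology
open Finset (range sum_range_succ)

lemma gammaPDFReal_one_of_pos {a x : ℝ} (hx : 0 < x) :
    gammaPDFReal a 1 x = exp (-x) * x ^ (a - 1) / Gamma a := by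
  simp only [gammaPDFReal, if_pos hx.le, one_rpow, one_mul]
  ring

lemma measurable_gammaPDF (a r : ℝ) : Measurable (gammaPDF a r) :=
  (measurable_gammaPDFReal a r).ennreal_ofReal

lemma ae_pos_gammaMeasure (a r : ℝ) : ∀ᵐ x ∂gammaMeasure a r, 0 < x := by
  rw [gammaMeasure, ae_withDensity_iff (measurable_gammaPDF a r)]
  filter_upwards [Measure.ae_ne volume 0] with x hx0 hpdf
  exact hx0.symm.lt_of_le (not_lt.1 fun hneg => hpdf (gammaPDF_of_neg hneg))

lemma gammaPDFReal_one_mul_ae_eq (a : ℝ) (f : ℝ → ℝ) :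
    (fun x => gammaPDFReal a 1 x * f x) =ᵐ[volume]
      (Ioi 0).indicator fun x => exp (-x) * x ^ (a - 1) * f x / Gamma a := by
  filter_upwards [Measure.ae_ne volume 0] with x hx0
  rcases hx0.lt_or_gt with hneg | hpos
  · simp [gammaPDFReal, hneg.not_ge, hneg.not_gt]
  · simp only [indicator_of_mem (mem_Ioi.2 hpos), gammaPDFReal_one_of_pos hpos]
    ring

lemma integral_gammaMeasure {a : ℝ} (ha : 0 < a) (f : ℝ → ℝ) :
    ∫ x, f x ∂gammaMeasure a 1 = (∫ x in Ioi 0, exp (-x) * x ^ (a - 1) * f x) / Gamma a := by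
  rw [gammaMeasure, integral_withDensity_eq_integral_toReal_smul (measurable_gammaPDF a 1)
    (ae_of_all _ fun _ => ENNReal.ofReal_lt_top)]
  simp_rw [gammaPDF, ENNReal.toReal_ofReal (gammaPDFReal_nonneg ha one_pos _), smul_eq_mul]
  rw [integral_congr_ae (gammaPDFReal_one_mul_ae_eq a f), integral_indicator measurableSet_Ioi,
    integral_div]

lemma integrable_gammaMeasure_iff {a : ℝ} (ha : 0 < a) (f : ℝ → ℝ) :
    Integrable f (gammaMeasure a 1) ↔
      IntegrableOn (fun x => exp (-x) * x ^ (a - 1) * f x) (Ioi 0) := by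
  rw [gammaMeasure, integrable_withDensity_iff (measurable_gammaPDF a 1)
    (ae_of_all _ fun _ => ENNReal.ofReal_lt_top)]
  simp_rw [gammaPDF, ENNReal.toReal_ofReal (gammaPDFReal_nonneg ha one_pos _), mul_comm (f _)]
  rw [integrable_congr (gammaPDFReal_one_mul_ae_eq a f), integrable_indicator_iff measurableSet_Ioi,
    IntegrableOn, IntegrableOn]
  simp_rw [div_eq_mul_inv]
  exact integrable_mul_const_iff (inv_pos.2 (Gamma_pos_of_pos ha)).ne'.isUnit _

lemma exp_neg_mul_rpow_mul_rpow {x : ℝ} (hx : 0 < x) (a b : ℝ) :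
    exp (-x) * x ^ (a - 1) * x ^ b = exp (-x) * x ^ (a + b - 1) := by
  rw [mul_assoc, ← rpow_add hx]
  ring_nf

lemma integrable_rpow_gammaMeasure {a b : ℝ} (ha : 0 < a) (hab : 0 < a + b) :
    Integrable (fun x => x ^ b) (gammaMeasure a 1) := by
  rw [integrable_gammaMeasure_iff ha]
  exact (GammaIntegral_convergent hab).congr_fun
    (fun x hx => (exp_neg_mul_rpow_mul_rpow hx a b).symm) measurableSet_Ioi

lemma integral_rpow_gammaMeasure {a b : ℝ} (ha : 0 < a) (hab : 0 < a + b) :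
    ∫ x, x ^ b ∂gammaMeasure a 1 = Gamma (a + b) / Gamma a := by
  rw [integral_gammaMeasure ha, Gamma_eq_integral hab,
    setIntegral_congr_fun measurableSet_Ioi fun x hx => exp_neg_mul_rpow_mul_rpow hx a b]

lemma integrable_id_gammaMeasure {a : ℝ} (ha : 0 < a) :
    Integrable (fun x => x) (gammaMeasure a 1) := by
  simpa using integrable_rpow_gammaMeasure (b := 1) ha (by linarith)

lemma integral_id_gammaMeasure {a : ℝ} (ha : 0 < a) :
    ∫ x, x ∂gammaMeasure a 1 = a := by
  have h := integral_rpow_gammaMeasure (b := 1) ha (by linarith)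
  simp only [rpow_one, Gamma_add_one ha.ne'] at h
  rw [h, mul_div_cancel_right₀ _ (Gamma_pos_of_pos ha).ne']

lemma abs_log_le_rpow_add_rpow_neg {x ε : ℝ} (hx : 0 < x) (hε : 0 < ε) :
    |log x| ≤ (x ^ ε + x ^ (-ε)) / ε := by
  have hle := log_le_rpow_div hx.le hε
  have hge := log_le_rpow_div (inv_pos.2 hx).le hε
  rw [log_inv, inv_rpow hx.le, ← rpow_neg hx.le] at hge
  rw [abs_le, add_div]
  have : 0 < x ^ ε / ε := by positivity
  have : 0 < x ^ (-ε) / ε := by positivity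
  constructor <;> linarith

lemma integrable_log_gammaMeasure {a : ℝ} (ha : 0 < a) :
    Integrable log (gammaMeasure a 1) := by
  have hdom : Integrable (fun x => (x ^ (a / 2) + x ^ (-(a / 2))) / (a / 2)) (gammaMeasure a 1) :=
    ((integrable_rpow_gammaMeasure ha (by linarith)).add
      (integrable_rpow_gammaMeasure ha (by linarith))).div_const _
  refine hdom.mono' measurable_log.aestronglyMeasurable ?_
  filter_upwards [ae_pos_gammaMeasure a 1] with x hx
  exact abs_log_le_rpow_add_rpow_neg hx (half_pos ha)

lemma integral_log_neg_of_integral_eq_one {α : Type*} [MeasurableSpace α] {μ : Measure α}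
    [IsProbabilityMeasure μ] {g : α → ℝ} (hg_pos : ∀ᵐ x ∂μ, 0 < g x) (hg : Integrable g μ)
    (hlog : Integrable (fun x => log (g x)) μ) (hg_one : ∫ x, g x ∂μ = 1)
    (hne : ¬ g =ᵐ[μ] 1) : ∫ x, log (g x) ∂μ < 0 := by
  set h : α → ℝ := fun x => g x - 1 - log (g x)
  have h_nonneg : 0 ≤ᵐ[μ] h := by
    filter_upwards [hg_pos] with x hx
    exact sub_nonneg.2 (log_le_sub_one_of_pos hx)
  have hg_sub : Integrable (fun x => g x - 1) μ := hg.sub (integrable_const 1)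
  have h_int : Integrable h μ := hg_sub.sub hlog
  have h_supp : ¬ h =ᵐ[μ] 0 := fun h0 => hne <| by
    filter_upwards [hg_pos, h0] with x hx hx0
    by_contra hx1
    linarith [log_lt_sub_one_of_pos hx hx1, show h x = 0 from hx0]
  have h_pos : 0 < ∫ x, h x ∂μ :=
    (integral_nonneg_of_ae h_nonneg).lt_of_ne fun h0 =>
      h_supp ((integral_eq_zero_iff_of_nonneg_ae h_nonneg h_int).1 h0.symm)
  have h_eq : ∫ x, h x ∂μ = -∫ x, log (g x) ∂μ := by
    simp only [h]
    rw [integral_sub hg_sub hlog, integral_sub hg (integrable_const 1),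
      hg_one, integral_const, probReal_univ, one_smul]
    ring
  linarith

lemma log_Gamma_sub_lt_mul_integral_log {θ θ₀ : ℝ} (hθ : 0 < θ) (hθ₀ : 0 < θ₀) (hne : θ ≠ θ₀) :
    log (Gamma θ) - log (Gamma θ₀) < (θ - θ₀) * ∫ x, log x ∂gammaMeasure θ 1 := by
  have := isProbabilityMeasure_gammaMeasure hθ one_pos
  have hΓ := Gamma_pos_of_pos hθ
  have hΓ₀ := Gamma_pos_of_pos hθ₀
  set μ := gammaMeasure θ 1
  set c := Gamma θ / Gamma θ₀
  -- `g` is the density of `Gamma(θ₀, 1)` with respect to `Gamma(θ, 1)`.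
  set g : ℝ → ℝ := fun x => x ^ (θ₀ - θ) * c
  have hg_pos : ∀ᵐ x ∂μ, 0 < g x := by
    filter_upwards [ae_pos_gammaMeasure θ 1] with x hx
    positivity
  have hg_int : Integrable g μ :=
    (integrable_rpow_gammaMeasure hθ (by linarith)).mul_const c
  have hg_one : ∫ x, g x ∂μ = 1 := by
    rw [integral_mul_const, integral_rpow_gammaMeasure hθ (by linarith), add_sub_cancel]
    simp only [c]
    field_simp
  have hlog_g : (fun x => log (g x)) =ᵐ[μ] fun x => (θ₀ - θ) * log x + log c := by
    filter_upwards [ae_pos_gammaMeasure θ 1] with x hx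
    rw [log_mul (rpow_pos_of_pos hx _).ne' (by positivity), log_rpow hx]
  have hlog_int : Integrable (fun x => (θ₀ - θ) * log x + log c) μ :=
    ((integrable_log_gammaMeasure hθ).const_mul _).add (integrable_const _)
  -- If `g = 1` a.e. the two Gamma laws coincide, and so would their means `θ` and `θ₀`.
  have hg_ne : ¬ g =ᵐ[μ] 1 := by
    intro hg1
    have hmean : ∫ x, x * g x ∂μ = ∫ x, x ∂μ :=
      integral_congr_ae (hg1.mono fun x hx => by simp [hx])
    have hxg : (fun x => x * g x) =ᵐ[μ] fun x => x ^ (θ₀ - θ + 1) * c := by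
      filter_upwards [ae_pos_gammaMeasure θ 1] with x hx
      rw [rpow_add_one hx.ne']
      ring
    rw [integral_congr_ae hxg, integral_mul_const, integral_rpow_gammaMeasure hθ (by linarith),
      integral_id_gammaMeasure hθ, show θ + (θ₀ - θ + 1) = θ₀ + 1 by ring,
      Gamma_add_one hθ₀.ne'] at hmean
    simp only [c] at hmean
    field_simp at hmean
    exact hne hmean.symm
  have hneg := integral_log_neg_of_integral_eq_one hg_pos hg_int
    (hlog_int.congr hlog_g.symm) hg_one hg_ne
  rw [integral_congr_ae hlog_g, integral_add ((integrable_log_gammaMeasure hθ).const_mul _)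
    (integrable_const _), integral_const_mul, integral_const, probReal_univ, one_smul,
    log_div hΓ.ne' hΓ₀.ne'] at hneg
  linarith

lemma tendsto_average_mul_of_tendsto_zero {a b : ℕ → ℝ} {L : ℝ} (ha : Tendsto a atTop (𝓝 0))
    (hb : Tendsto (fun n : ℕ => (∑ i ∈ range n, |b i|) / n) atTop (𝓝 L)) :
    Tendsto (fun n : ℕ => (∑ i ∈ range n, a i * b i) / n) atTop (𝓝 0) := by
  have hab : (fun i => a i * b i) =o[atTop] fun i => |b i| + 1 := by
    refine (((isLittleO_one_iff ℝ).2 ha).mul_isBigO (g₂ := fun i => |b i| + 1)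
      (isBigO_of_le _ fun i => ?_)).congr_right fun i => one_mul _
    rw [norm_eq_abs, norm_eq_abs, abs_of_pos (by positivity : 0 < |b i| + 1)]
    linarith
  have hsum_lower (n : ℕ) : (n : ℝ) ≤ ∑ i ∈ range n, (|b i| + 1) := by
    simpa using Finset.sum_le_sum fun i (_ : i ∈ range n) =>
      le_add_of_nonneg_left (a := (1 : ℝ)) (abs_nonneg (b i))
  have hsum := hab.sum_range (fun i => by positivity)
    (tendsto_atTop_mono hsum_lower tendsto_natCast_atTop_atTop)
  have hO : (fun n => ∑ i ∈ range n, (|b i| + 1)) =O[atTop] fun n => (n : ℝ) := by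
    simp only [Finset.sum_add_distrib, Finset.sum_const, Finset.card_range, nsmul_one]
    exact (isBigO_of_div_tendsto_nhds (.of_forall fun n hn => by simp_all) L hb).add
      (isBigO_refl _ _)
  exact (hsum.trans_isBigO hO).tendsto_div_nhds_zero

lemma tendsto_sum_atTop_of_average {u : ℕ → ℝ} {K : ℝ} (hK : 0 < K)
    (h : Tendsto (fun n : ℕ => (∑ i ∈ range n, u i) / n) atTop (𝓝 K)) :
    Tendsto (fun n => ∑ i ∈ range n, u i) atTop atTop := by
  refine (tendsto_natCast_atTop_atTop.atTop_mul_pos hK h).congr' ?_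
  filter_upwards [eventually_ne_atTop 0] with n hn
  field_simp

lemma log_gammaPDFReal_div {a b x : ℝ} (ha : 0 < a) (hb : 0 < b) (hx : 0 < x) :
    log (gammaPDFReal a 1 x / gammaPDFReal b 1 x) =
      (a - b) * log x - (log (Gamma a) - log (Gamma b)) := by
  have hΓa := Gamma_pos_of_pos ha
  have hΓb := Gamma_pos_of_pos hb
  have h_log_pdf (c : ℝ) (hΓ : 0 < Gamma c) :
      log (gammaPDFReal c 1 x) = -x + (c - 1) * log x - log (Gamma c) := by
    rw [gammaPDFReal_one_of_pos hx, log_div (by positivity) hΓ.ne',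
      log_mul (exp_pos _).ne' (rpow_pos_of_pos hx _).ne', log_exp, log_rpow hx]
  rw [log_div (gammaPDFReal_pos ha one_pos hx).ne' (gammaPDFReal_pos hb one_pos hx).ne',
    h_log_pdf a hΓa, h_log_pdf b hΓb]
  ring

lemma tendsto_prod_gammaPDFReal_div_atTop {θ θ₀ m L : ℝ} {x θ' : ℕ → ℝ} (hθ₀ : 0 < θ₀)
    (hθ : 0 < θ) (hx : ∀ i, 0 < x i) (hθ'_pos : ∀ i, 0 < θ' i)
    (hθ'_lim : Tendsto θ' atTop (𝓝 θ))
    (hlog : Tendsto (fun n : ℕ => (∑ i ∈ range n, log (x i)) / n) atTop (𝓝 m))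
    (habs : Tendsto (fun n : ℕ => (∑ i ∈ range n, |log (x i)|) / n) atTop (𝓝 L))
    (hK : log (Gamma θ) - log (Gamma θ₀) < (θ - θ₀) * m) :
    Tendsto (fun n => ∏ i ∈ range n, gammaPDFReal (θ' i) 1 (x i) / gammaPDFReal θ₀ 1 (x i))
      atTop atTop := by
  have hprod (n : ℕ) : ∏ i ∈ range n, gammaPDFReal (θ' i) 1 (x i) / gammaPDFReal θ₀ 1 (x i) =
      exp (∑ i ∈ range n, ((θ - θ₀) * log (x i) + (θ' i - θ) * log (x i)
        - (log (Gamma (θ' i)) - log (Gamma θ₀)))) := by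
    rw [exp_sum]
    refine Finset.prod_congr rfl fun i _ => ?_
    rw [show (θ - θ₀) * log (x i) + (θ' i - θ) * log (x i) = (θ' i - θ₀) * log (x i) by ring,
      ← log_gammaPDFReal_div (hθ'_pos i) hθ₀ (hx i), exp_log (div_pos
      (gammaPDFReal_pos (hθ'_pos i) one_pos (hx i)) (gammaPDFReal_pos hθ₀ one_pos (hx i)))]
  have hmain : Tendsto (fun n : ℕ => (∑ i ∈ range n, (θ - θ₀) * log (x i)) / n) atTop
      (𝓝 ((θ - θ₀) * m)) := by
    simpa only [← Finset.mul_sum, mul_div_assoc] using hlog.const_mul (θ - θ₀)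
  have herr : Tendsto (fun n : ℕ => (∑ i ∈ range n, (θ' i - θ) * log (x i)) / n) atTop (𝓝 0) :=
    tendsto_average_mul_of_tendsto_zero (tendsto_sub_nhds_zero_iff.2 hθ'_lim) habs
  have hΓ : Tendsto (fun n : ℕ => (∑ i ∈ range n, (log (Gamma (θ' i)) - log (Gamma θ₀))) / n)
      atTop (𝓝 (log (Gamma θ) - log (Gamma θ₀))) := by
    have hcont : ContinuousAt (fun c => log (Gamma c) - log (Gamma θ₀)) θ :=
      ((differentiableOn_Gamma_Ioi.differentiableAt (Ioi_mem_nhds hθ)).continuousAt.log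
        (Gamma_pos_of_pos hθ).ne').sub continuousAt_const
    simpa only [inv_mul_eq_div, Function.comp_def] using (hcont.tendsto.comp hθ'_lim).cesaro
  have havg := (hmain.add herr).sub hΓ
  rw [add_zero] at havg
  simp only [← add_div, ← sub_div, ← Finset.sum_add_distrib, ← Finset.sum_sub_distrib] at havg
  simpa only [hprod, Function.comp_def] using
    tendsto_exp_atTop.comp (tendsto_sum_atTop_of_average (sub_pos.2 hK) havg)

theorem strong_law_ae_comp {Ω α : Type*} [MeasurableSpace Ω] [MeasurableSpace α] {P : Measure Ω}
    {μ : Measure α} {X : ℕ → Ω → α} (hX : ∀ i, Measurable (X i)) (hindep : iIndepFun X P)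
    (hlaw : ∀ i, P.map (X i) = μ) {φ : α → ℝ} (hφ : Measurable φ) (hφμ : Integrable φ μ) :
    ∀ᵐ ω ∂P, Tendsto (fun n : ℕ => (∑ i ∈ range n, φ (X i ω)) / n) atTop (𝓝 (∫ x, φ x ∂μ)) := by
  rw [← hlaw 0] at hφμ ⊢
  rw [integral_map (hX 0).aemeasurable hφ.aestronglyMeasurable]
  refine strong_law_ae_real (fun i => φ ∘ X i) (hφμ.comp_measurable (hX 0))
    (fun i j hij => (hindep.indepFun hij).comp hφ hφ) fun i => ?_
  exact IdentDistrib.comp ⟨(hX i).aemeasurable, (hX 0).aemeasurable, by rw [hlaw, hlaw]⟩ hφ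

lemma tendsto_sum_add_div_add {x : ℕ → ℝ} {θ : ℝ} (s t : ℝ)
    (h : Tendsto (fun n : ℕ => (∑ i ∈ range n, x i) / n) atTop (𝓝 θ)) :
    Tendsto (fun n : ℕ => ((∑ i ∈ range n, x i) + s) / (n + t)) atTop (𝓝 θ) := by
  have h' := (h.add (tendsto_const_div_atTop_nhds_zero_nat s)).mul (tendsto_natCast_div_add_atTop t)
  rw [add_zero, mul_one] at h'
  refine h'.congr' ?_
  filter_upwards [eventually_ne_atTop 0] with n hn
  rw [← add_div, div_mul_div_cancel₀ (Nat.cast_ne_zero.2 hn)]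

/-- `shapeEstimate θ₀ s t x n` is `θ_{n+1}` computed from the observations `x i = X_{i+1}`. -/
def shapeEstimate (θ₀ s t : ℝ) (x : ℕ → ℝ) : ℕ → ℝ
  | 0 => if s = 0 ∨ t = 0 then θ₀ else s / t
  | n + 1 => ((∑ i ∈ range (n + 1), x i) + s) / ((n + 1 : ℕ) + t)

lemma shapeEstimate_pos {θ₀ s t : ℝ} {x : ℕ → ℝ} (hθ₀ : 0 < θ₀) (hs : 0 ≤ s) (ht : 0 ≤ t)
    (hx : ∀ i, 0 < x i) : ∀ n, 0 < shapeEstimate θ₀ s t x n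
  | 0 => by
    rw [shapeEstimate]
    split_ifs with hst
    · exact hθ₀
    · rw [not_or] at hst
      exact div_pos (hs.lt_of_ne' hst.1) (ht.lt_of_ne' hst.2)
  | n + 1 => by
    rw [shapeEstimate, sum_range_succ]
    have := Finset.sum_nonneg fun i (_ : i ∈ range n) => (hx i).le
    have := hx n
    positivity

lemma tendsto_shapeEstimate {θ₀ θ : ℝ} (s t : ℝ) {x : ℕ → ℝ}
    (h : Tendsto (fun n : ℕ => (∑ i ∈ range n, x i) / n) atTop (𝓝 θ)) :
    Tendsto (shapeEstimate θ₀ s t x) atTop (𝓝 θ) :=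
  (tendsto_add_atTop_iff_nat 1).1 ((tendsto_sum_add_div_add s t h).comp (tendsto_add_atTop_nat 1))

lemma measure_exists_le_eq_one_of_tendsto_atTop {Ω : Type*} [MeasurableSpace Ω]
    {P : Measure Ω} [IsProbabilityMeasure P] {Λ : ℕ → Ω → ℝ}
    (h : ∀ᵐ ω ∂P, Tendsto (fun n => Λ n ω) atTop atTop) (c : ℝ) (N : ℕ) :
    P {ω | ∃ n, N ≤ n ∧ c ≤ Λ n ω} = 1 := by
  rw [← measure_univ (μ := P)]
  refine measure_congr (eventuallyEq_univ.2 ?_)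
  filter_upwards [h] with ω hω
  obtain ⟨n, hn⟩ := ((hω.eventually_ge_atTop c).and (eventually_ge_atTop N)).exists
  exact ⟨n, hn.2, hn.1⟩

@[to_additive sum_Icc_one_eq_sum_range]
lemma prod_Icc_one_eq_prod_range {M : Type*} [CommMonoid M] (f : ℕ → M) (n : ℕ) :
    ∏ i ∈ Finset.Icc 1 n, f i = ∏ i ∈ range n, f (i + 1) := by
  rw [Finset.range_eq_Ico, Finset.prod_Ico_add' f 0 n 1]
  rfl

/-- The Robbins–Siegmund test for the Gamma shape parameter has power one:
for every `θ > 0` with `θ ≠ θ₀`, if `X₁, X₂, …` are i.i.d. Gamma(θ,1), then `Λ_n → ∞`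
almost surely, and `P_θ(τ_b < ∞) = 1` for every `b > 0`. -/
theorem gamma_power_one
    {Ω : Type*} [MeasurableSpace Ω] (P : Measure Ω) [IsProbabilityMeasure P]
    (θ₀ θ : ℝ) (hθ₀ : 0 < θ₀) (hθ : 0 < θ) (hne : θ ≠ θ₀)
    (X : ℕ → Ω → ℝ) (hXmeas : ∀ i, Measurable (X i))
    (hindep : iIndepFun X P)
    (hlaw : ∀ i, 1 ≤ i → Measure.map (X i) P = gammaMeasure θ 1)
    (s t : ℝ) (hs : 0 ≤ s) (ht : 0 ≤ t)
    (θe : ℕ → Ω → ℝ)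
    (hθ1 : ∀ ω, θe 1 ω = if s = 0 ∨ t = 0 then θ₀ else s / t)
    (hθrec : ∀ n ω, 1 ≤ n →
      θe (n + 1) ω = ((∑ i ∈ Finset.Icc 1 n, X i ω) + s) / ((n : ℝ) + t))
    (Λ : ℕ → Ω → ℝ)
    (hΛ : ∀ n ω, Λ n ω = ∏ i ∈ Finset.Icc 1 n, gam (θe i ω) (X i ω) / gam θ₀ (X i ω)) :
    (∀ᵐ ω ∂P, Filter.Tendsto (fun n => Λ n ω) Filter.atTop Filter.atTop) ∧
      ∀ b : ℝ, 0 < b → P {ω | ∃ n, 1 ≤ n ∧ Real.exp b ≤ Λ n ω} = 1 := by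
  have hlaw' (i : ℕ) : P.map (X (i + 1)) = gammaMeasure θ 1 := hlaw (i + 1) (Nat.le_add_left 1 i)
  have slln {φ : ℝ → ℝ} (hφ : Measurable φ) (hφμ : Integrable φ (gammaMeasure θ 1)) :=
    strong_law_ae_comp (fun i => hXmeas (i + 1)) (hindep.precomp (add_left_injective 1)) hlaw'
      hφ hφμ
  have hX_pos : ∀ᵐ ω ∂P, ∀ i, 0 < X (i + 1) ω := ae_all_iff.2 fun i =>
    ae_of_ae_map (hXmeas _).aemeasurable (hlaw' i ▸ ae_pos_gammaMeasure θ 1)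
  have hΛ_lim : ∀ᵐ ω ∂P, Tendsto (fun n => Λ n ω) atTop atTop := by
    filter_upwards [hX_pos, slln measurable_id' (integrable_id_gammaMeasure hθ),
      slln measurable_log (integrable_log_gammaMeasure hθ),
      slln measurable_log.abs (integrable_log_gammaMeasure hθ).abs] with ω hX hmean hlog habs
    rw [integral_id_gammaMeasure hθ] at hmean
    have hθe : (fun i => θe (i + 1) ω) = shapeEstimate θ₀ s t fun i => X (i + 1) ω := funext fun
      | 0 => hθ1 ω
      | n + 1 => by rw [hθrec _ ω (Nat.le_add_left 1 n), sum_Icc_one_eq_sum_range]; rfl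
    refine (tendsto_prod_gammaPDFReal_div_atTop hθ₀ hθ hX (hθe ▸ shapeEstimate_pos hθ₀ hs ht hX)
      (hθe ▸ tendsto_shapeEstimate s t hmean) hlog habs
      (log_Gamma_sub_lt_mul_integral_log hθ hθ₀ hne)).congr fun n => ?_
    rw [hΛ, prod_Icc_one_eq_prod_range]
    rfl
  exact ⟨hΛ_lim, fun b _ => measure_exists_le_eq_one_of_tendsto_atTop hΛ_lim (exp b) 1⟩
end
end

section
/- Let t ≥ 0 and let (γ_n)_{n≥2} be a sequence of strictly positive reals satisfying the recursion γ_n = γ_{n+1} + log(1 + γ_{n+1})/(t + n − 1) for all n ≥ 2. Then (γ_n) is decreasing with limit 0, the series Σ_{n≥2} γ_{n+1}/(t + n − 1) converges, and the sequence y_n := (t + n − 1)·γ_n is bounded above. -/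
/-!
Each step of the recursion lowers `γ` by `log (1 + γₙ₊₁) / (t + n - 1) > 0`, so `γ` decreases, and
since `log (1 + x) ≥ 2x / (x + 2)` the series `∑ γₙ₊₁ / (t + n - 1)` is dominated by a multiple of
the telescoping sum `∑ (γₙ - γₙ₊₁) ≤ γ₂`. A positive limit would then contradict the divergence of
the harmonic series. For `yₙ = (t + n - 1) γₙ` the recursion reads
`yₙ₊₁ - yₙ = γₙ₊₁ - log (1 + γₙ₊₁) ∈ [0, γₙ₊₁²]`, and `γₙ₊₁² ≤ yₙ₊₁ · γₙ₊₁ / (t + n - 1)`, whose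
sum over a tail is small; so `y` is increasing with increments at most a small fraction of itself,
which bounds it.
-/

open Filter Real Finset Topology

lemma Real.sub_log_one_add_le_sq {x : ℝ} (hx : 0 ≤ x) : x - log (1 + x) ≤ x ^ 2 := by
  have h := le_log_one_add_of_nonneg hx
  have : x - 2 * x / (x + 2) ≤ x ^ 2 := by
    rw [sub_le_iff_le_add, ← sub_le_iff_le_add', le_div_iff₀ (by positivity)]
    nlinarith
  linarith

lemma Real.not_summable_one_div_add_natCast {c : ℝ} (hc : 0 < c) :
    ¬ Summable fun n : ℕ => 1 / (c + n) := by
  have h := (Real.summable_one_div_nat_add_rpow c 1).not.mpr (lt_irrefl 1)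
  contrapose! h
  refine h.congr fun n => ?_
  rw [rpow_one, abs_of_pos (by positivity), add_comm]

lemma Antitone.summable_sub_succ {f : ℕ → ℝ} (hf : Antitone f) (h0 : ∀ n, 0 ≤ f n) :
    Summable fun n => f n - f (n + 1) :=
  summable_of_sum_range_le (c := f 0) (fun n => sub_nonneg.mpr (hf n.le_succ)) fun n => by
    rw [sum_range_sub']
    linarith [h0 n]

lemma Monotone.bddAbove_range_of_sub_le_mul {y a : ℕ → ℝ} (hy : Monotone y) (hy0 : ∀ n, 0 ≤ y n)
    (ha0 : ∀ n, 0 ≤ a n) (ha : Summable a) (hstep : ∀ n, y (n + 1) - y n ≤ a n * y (n + 1)) :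
    BddAbove (Set.range y) := by
  -- past an index `n₀` whose tail sum of `a` is at most `1 / 2`, `y N - y n₀ ≤ y N / 2`
  obtain ⟨n₀, hn₀⟩ := ((tendsto_sum_nat_add a).eventually (eventually_le_nhds one_half_pos)).exists
  have htail : ∀ N, n₀ ≤ N → ∑ k ∈ Ico n₀ N, a k ≤ 1 / 2 := fun N hN => by
    have := ha.sum_add_tsum_nat_add n₀
    have := ha.sum_le_tsum (range N) fun k _ => ha0 k
    rw [sum_Ico_eq_sub _ hN]
    linarith
  have hgrowth : ∀ N, n₀ ≤ N → y N - y n₀ ≤ y N * ∑ k ∈ Ico n₀ N, a k := by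
    intro N hN
    induction N, hN using Nat.le_induction with
    | base => simp
    | succ N hN ih =>
      rw [sum_Ico_succ_top hN, mul_add]
      have hS : 0 ≤ ∑ k ∈ Ico n₀ N, a k := sum_nonneg fun k _ => ha0 k
      have := mul_le_mul_of_nonneg_right (hy N.le_succ) hS
      linarith [hstep N]
  refine ⟨2 * y n₀, ?_⟩
  rintro _ ⟨N, rfl⟩
  rcases le_total N n₀ with hN | hN
  · linarith [hy hN, hy0 n₀]
  · nlinarith [hgrowth N hN, htail N hN, hy0 N]

section GammaRecursion

variable {c : ℝ} {g : ℕ → ℝ}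

lemma strictAnti_of_eq_add_log_div (hc : 0 < c) (hg : ∀ n, 0 < g n)
    (hrec : ∀ n, g n = g (n + 1) + log (1 + g (n + 1)) / (c + n)) : StrictAnti g :=
  strictAnti_nat_of_succ_lt fun n => by
    have : 0 < log (1 + g (n + 1)) / (c + n) :=
      div_pos (log_pos (by linarith [hg (n + 1)])) (by positivity)
    linarith [hrec n]

lemma summable_div_of_eq_add_log_div (hc : 0 < c) (hg : ∀ n, 0 < g n)
    (hrec : ∀ n, g n = g (n + 1) + log (1 + g (n + 1)) / (c + n)) :
    Summable fun n => g (n + 1) / (c + n) := by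
  have hanti := strictAnti_of_eq_add_log_div hc hg hrec
  refine .of_nonneg_of_le (fun n => by have := hg (n + 1); positivity) (fun n => ?_)
    ((hanti.antitone.summable_sub_succ fun n => (hg n).le).mul_left ((g 0 + 2) / 2))
  have hx : g (n + 1) ≤ (g 0 + 2) / 2 * log (1 + g (n + 1)) := by
    have h := le_log_one_add_of_nonneg (hg (n + 1)).le
    rw [div_le_iff₀ (by linarith [hg (n + 1)])] at h
    have := hanti.antitone (Nat.zero_le (n + 1))
    nlinarith [log_nonneg (by linarith [hg (n + 1)] : (1 : ℝ) ≤ 1 + g (n + 1))]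
  rw [sub_eq_of_eq_add' (hrec n), ← mul_div_assoc]
  gcongr

lemma tendsto_zero_of_eq_add_log_div (hc : 0 < c) (hg : ∀ n, 0 < g n)
    (hrec : ∀ n, g n = g (n + 1) + log (1 + g (n + 1)) / (c + n)) : Tendsto g atTop (𝓝 0) := by
  have hanti := (strictAnti_of_eq_add_log_div hc hg hrec).antitone
  have hbdd : BddBelow (Set.range g) := ⟨0, by rintro _ ⟨n, rfl⟩; exact (hg n).le⟩
  have hlim := tendsto_atTop_ciInf hanti hbdd
  set L := ⨅ n, g n
  suffices L = 0 by rwa [this] at hlim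
  refine le_antisymm (not_lt.mp fun hL => not_summable_one_div_add_natCast hc ?_)
    (le_ciInf fun n => (hg n).le)
  -- a positive limit would make `∑ g (n + 1) / (c + n)` dominate `L * ∑ 1 / (c + n)`
  refine ((summable_div_of_eq_add_log_div hc hg hrec).mul_left L⁻¹).of_nonneg_of_le
    (fun n => by positivity) fun n => ?_
  rw [← mul_div_assoc, div_le_div_iff_of_pos_right (by positivity),
    le_inv_mul_iff₀ hL, mul_one]
  exact ciInf_le hbdd (n + 1)

lemma sub_eq_sub_log_of_eq_add_log_div (hc : 0 < c)
    (hrec : ∀ n, g n = g (n + 1) + log (1 + g (n + 1)) / (c + n)) (n : ℕ) :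
    (c + (n + 1 : ℕ)) * g (n + 1) - (c + n) * g n = g (n + 1) - log (1 + g (n + 1)) := by
  rw [hrec n]
  have : c + n ≠ 0 := by positivity
  push_cast
  field_simp
  ring

lemma bddAbove_mul_of_eq_add_log_div (hc : 0 < c) (hg : ∀ n, 0 < g n)
    (hrec : ∀ n, g n = g (n + 1) + log (1 + g (n + 1)) / (c + n)) :
    BddAbove (Set.range fun n => (c + n) * g n) := by
  have hstep := sub_eq_sub_log_of_eq_add_log_div hc hrec
  refine Monotone.bddAbove_range_of_sub_le_mul (a := fun n => g (n + 1) / (c + n))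
    (monotone_nat_of_le_succ fun n => ?_) (fun n => by have := hg n; positivity)
    (fun n => by have := hg (n + 1); positivity) (summable_div_of_eq_add_log_div hc hg hrec)
    fun n => ?_
  · have := hstep n
    linarith [log_le_sub_one_of_pos (by linarith [hg (n + 1)] : 0 < 1 + g (n + 1))]
  · calc (c + (n + 1 : ℕ)) * g (n + 1) - (c + n) * g n
        = g (n + 1) - log (1 + g (n + 1)) := hstep n
      _ ≤ g (n + 1) ^ 2 := sub_log_one_add_le_sq (hg (n + 1)).le
      _ = g (n + 1) / (c + (n + 1 : ℕ)) * ((c + (n + 1 : ℕ)) * g (n + 1)) := by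
        field_simp
      _ ≤ g (n + 1) / (c + n) * ((c + (n + 1 : ℕ)) * g (n + 1)) := by
        have := hg (n + 1)
        gcongr
        linarith

end GammaRecursion

/-- If `t ≥ 0` and `(γ_n)_{n≥2}` are strictly positive reals with
`γ_n = γ_{n+1} + log(1 + γ_{n+1})/(t + n − 1)` for all `n ≥ 2`, then `(γ_n)` is
decreasing with limit `0`, the series `Σ_{n≥2} γ_{n+1}/(t + n − 1)` converges, and
`y_n = (t + n − 1)·γ_n` is bounded above. -/
theorem gamma_recursion_lemma (t : ℝ) (ht : 0 ≤ t) (γ : ℕ → ℝ)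
    (hpos : ∀ n : ℕ, 2 ≤ n → 0 < γ n)
    (hrec : ∀ n : ℕ, 2 ≤ n →
      γ n = γ (n + 1) + Real.log (1 + γ (n + 1)) / (t + (n : ℝ) - 1)) :
    (∀ n : ℕ, 2 ≤ n → γ (n + 1) < γ n) ∧
      Filter.Tendsto (fun n : ℕ => γ n) Filter.atTop (nhds 0) ∧
      Summable (fun m : ℕ => γ ((m + 2) + 1) / (t + ((m : ℝ) + 2) - 1)) ∧
      ∃ M : ℝ, ∀ n : ℕ, 2 ≤ n → (t + (n : ℝ) - 1) * γ n ≤ M := by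
  set g : ℕ → ℝ := fun m => γ (m + 2)
  have hc : 0 < t + 1 := by linarith
  have hg (m : ℕ) : 0 < g m := hpos (m + 2) (by omega)
  have hrec' (m : ℕ) : g m = g (m + 1) + log (1 + g (m + 1)) / (t + 1 + m) := by
    convert hrec (m + 2) (by omega) using 3
    push_cast
    ring
  refine ⟨fun n hn => ?_,
    (tendsto_add_atTop_iff_nat 2).mp (tendsto_zero_of_eq_add_log_div hc hg hrec'),
    (summable_div_of_eq_add_log_div hc hg hrec').congr fun m => by congr 1; ring, ?_⟩
  · obtain ⟨m, rfl⟩ := Nat.exists_eq_add_of_le' hn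
    exact strictAnti_of_eq_add_log_div hc hg hrec' m.lt_succ_self
  · obtain ⟨M, hM⟩ := bddAbove_mul_of_eq_add_log_div hc hg hrec'
    refine ⟨M, fun n hn => ?_⟩
    obtain ⟨m, rfl⟩ := Nat.exists_eq_add_of_le' hn
    convert hM ⟨m, rfl⟩ using 1
    push_cast
    ring
end

section
/- For every θ > 0 and every c with 0 < c < θ, there exists A > 0 such that for all φ > 0: |I(θ, φ) − (1/2)(φ − θ)²·I(θ)| ≤ A·|φ − θ|³ + (log φ^{−1})⁺·1(φ < c), where I(θ, φ) = (θ − φ)·ψ(θ) − (log Γ(θ) − log Γ(φ)) is the Kullback–Leibler information between Gamma(θ,1) and Gamma(φ,1), I(θ) = ψ'(θ) is the Fisher information, and ψ denotes the derivative of log Γ on (0,∞). -/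
noncomputable section

/-- The digamma function `ψ(θ) = d(log Γ(θ))/dθ`. -/
def digamma (x : ℝ) : ℝ := deriv (fun y => Real.log (Real.Gamma y)) x

/-- The Kullback–Leibler information between Gamma(θ,1) and Gamma(φ,1):
`I(θ,φ) = (θ−φ)ψ(θ) − (log Γ(θ) − log Γ(φ))`. -/
def klGamma (θ φ : ℝ) : ℝ :=
  (θ - φ) * digamma θ - (Real.log (Real.Gamma θ) - Real.log (Real.Gamma φ))

open Set


lemma gammaC_analytic {z : ℂ} (hz : 0 < z.re) : AnalyticAt ℂ Complex.Gamma z := by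
  have : AnalyticOnNhd ℂ Complex.Gamma {s : ℂ | 0 < s.re} := by
    refine DifferentiableOn.analyticOnNhd (fun s hs => ?_) (isOpen_lt continuous_const Complex.continuous_re)
    refine (Complex.differentiableAt_Gamma _ fun m => ?_).differentiableWithinAt
    intro h
    rw [Set.mem_setOf_eq, h, Complex.neg_re, Complex.natCast_re, neg_pos] at hs
    exact absurd hs (not_lt.2 (Nat.cast_nonneg m))
  exact this z hz

lemma gamma_contDiffAt {x : ℝ} (hx : 0 < x) : ContDiffAt ℝ (⊤ : ℕ∞) Real.Gamma x := by
  have h1 : AnalyticAt ℝ (fun y : ℝ => (Complex.Gamma y).re) x := by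
    apply (Complex.reCLM.analyticAt _).comp
    exact ((gammaC_analytic (by simpa using hx)).restrictScalars).comp
      (Complex.ofRealCLM.analyticAt x)
  have h2 : (fun y : ℝ => (Complex.Gamma y).re) = Real.Gamma := by
    funext y; rw [Complex.Gamma_ofReal]; exact Complex.ofReal_re _
  rw [h2] at h1
  exact h1.contDiffAt

lemma logGamma_contDiffOn : ContDiffOn ℝ (⊤ : ℕ∞) (fun y => Real.log (Real.Gamma y)) (Ioi 0) := by
  intro x hx
  refine (ContDiffAt.contDiffWithinAt ?_)
  exact (Real.contDiffAt_log.2 (Real.Gamma_pos_of_pos hx).ne').comp x (gamma_contDiffAt hx)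

lemma lg_hasDerivAt {x : ℝ} (hx : 0 < x) :
    HasDerivAt (fun y => Real.log (Real.Gamma y)) (digamma x) x := by
  have h := ((logGamma_contDiffOn x hx).contDiffAt (Ioi_mem_nhds hx)).differentiableAt (by simp)
  exact h.hasDerivAt

lemma digamma_contDiffOn : ContDiffOn ℝ (⊤ : ℕ∞) digamma (Ioi 0) :=
  logGamma_contDiffOn.deriv_of_isOpen isOpen_Ioi (mod_cast le_top)

lemma digamma_hasDerivAt {x : ℝ} (hx : 0 < x) :
    HasDerivAt digamma (deriv digamma x) x :=
  (((digamma_contDiffOn x hx).contDiffAt (Ioi_mem_nhds hx)).differentiableAt (by simp)).hasDerivAt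

lemma trigamma_contDiffOn : ContDiffOn ℝ (⊤ : ℕ∞) (deriv digamma) (Ioi 0) :=
  digamma_contDiffOn.deriv_of_isOpen isOpen_Ioi (mod_cast le_top)

lemma trigamma_hasDerivAt {x : ℝ} (hx : 0 < x) :
    HasDerivAt (deriv digamma) (deriv (deriv digamma) x) x :=
  (((trigamma_contDiffOn x hx).contDiffAt (Ioi_mem_nhds hx)).differentiableAt (by simp)).hasDerivAt

lemma quadgamma_continuousOn : ContinuousOn (deriv (deriv digamma)) (Ioi 0) :=
  ((trigamma_contDiffOn.deriv_of_isOpen isOpen_Ioi (mod_cast le_top) : ContDiffOn ℝ (⊤ : ℕ∞) _ _)).continuousOn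

lemma digamma_monotoneOn : MonotoneOn digamma (Ioi 0) := by
  have h := Real.convexOn_log_Gamma.monotoneOn_deriv
    (fun x (hx : x ∈ Ioi 0) =>
      (((logGamma_contDiffOn x hx).contDiffAt (Ioi_mem_nhds hx)).differentiableAt (by simp)))
  exact h

lemma lg_add_one {x : ℝ} (hx : 0 < x) :
    Real.log (Real.Gamma (x + 1)) = Real.log (Real.Gamma x) + Real.log x := by
  rw [Real.Gamma_add_one hx.ne', Real.log_mul hx.ne' (Real.Gamma_pos_of_pos hx).ne']
  ring

lemma abs_sub_of_mem_uIcc {a b x : ℝ} (hx : x ∈ uIcc a b) : |x - a| ≤ |b - a| := by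
  rcases le_total a b with h | h
  · rw [uIcc_of_le h] at hx
    rw [abs_of_nonneg (by linarith [hx.1]), abs_of_nonneg (by linarith)]
    linarith [hx.2]
  · rw [uIcc_of_ge h] at hx
    rw [abs_of_nonpos (by linarith [hx.2]), abs_of_nonpos (by linarith)]
    linarith [hx.1]

section main
variable (θ : ℝ)

noncomputable def Gfun (φ : ℝ) : ℝ :=
  Real.log (Real.Gamma φ) + (θ - φ) * digamma θ - Real.log (Real.Gamma θ)
    - (1/2) * (φ - θ)^2 * deriv digamma θ

noncomputable def G1fun (φ : ℝ) : ℝ :=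
  digamma φ - digamma θ - (φ - θ) * deriv digamma θ

noncomputable def G2fun (φ : ℝ) : ℝ := deriv digamma φ - deriv digamma θ

lemma Gfun_hasDerivAt {x : ℝ} (hx : 0 < x) : HasDerivAt (Gfun θ) (G1fun θ x) x := by
  have h1 := lg_hasDerivAt hx
  have h2 : HasDerivAt (fun φ : ℝ => (θ - φ) * digamma θ) (-digamma θ) x := by
    simpa using ((hasDerivAt_id x).const_sub θ).mul_const (digamma θ)
  have h3 : HasDerivAt (fun φ : ℝ => (1/2) * (φ - θ)^2 * deriv digamma θ)
      ((x - θ) * deriv digamma θ) x := by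
    have := (((hasDerivAt_id x).sub_const θ).pow 2).const_mul (1/2 : ℝ)
    have h4 := this.mul_const (deriv digamma θ)
    refine h4.congr_deriv ?_
    simp only [id_eq]
    push_cast
    ring
  have := ((h1.add h2).sub_const (Real.log (Real.Gamma θ))).sub h3
  refine this.congr_deriv ?_
  try simp only [G1fun, digamma, id_eq]
  try ring

lemma G1fun_hasDerivAt {x : ℝ} (hx : 0 < x) : HasDerivAt (G1fun θ) (G2fun θ x) x := by
  have h1 := digamma_hasDerivAt hx
  have h2 : HasDerivAt (fun φ : ℝ => (φ - θ) * deriv digamma θ) (deriv digamma θ) x := by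
    simpa using ((hasDerivAt_id x).sub_const θ).mul_const (deriv digamma θ)
  have := (h1.sub_const (digamma θ)).sub h2
  exact this

lemma regime_mid {c : ℝ} (hθ : 0 < θ) (hc : 0 < c) (hcθ : c < θ) :
    ∃ A : ℝ, 0 < A ∧ ∀ φ, c ≤ φ → φ ≤ 2*θ + 2 → |Gfun θ φ| ≤ A * |φ - θ|^3 := by
  set T := 2*θ + 2 with hT
  have hJsub : Icc c T ⊆ Ioi 0 := fun x hx => lt_of_lt_of_le hc hx.1
  obtain ⟨L, hL⟩ := (isCompact_Icc (a := c) (b := T)).exists_bound_of_continuousOn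
    (quadgamma_continuousOn.mono hJsub)
  have hθJ : θ ∈ Icc c T := ⟨hcθ.le, by linarith⟩
  have hL0 : 0 ≤ L := le_trans (norm_nonneg _) (hL θ hθJ)
  refine ⟨L + 1, by linarith, fun φ hφ1 hφ2 => ?_⟩
  have hφJ : φ ∈ Icc c T := ⟨hφ1, hφ2⟩
  -- step 0 : Lipschitz bound on deriv digamma
  have step0 : ∀ x ∈ Icc c T, |G2fun θ x| ≤ L * |x - θ| := by
    intro x hx
    have := Convex.norm_image_sub_le_of_norm_hasDerivWithin_le
      (f := deriv digamma) (f' := deriv (deriv digamma)) (s := Icc c T)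
      (fun y hy => (trigamma_hasDerivAt (hJsub hy)).hasDerivWithinAt)
      (fun y hy => hL y hy) (convex_Icc c T) hθJ hx
    simpa [G2fun, Real.norm_eq_abs] using this
  have hsub : uIcc θ φ ⊆ Icc c T := uIcc_subset_Icc hθJ hφJ
  -- step 1 : |G1| ≤ L |φ-θ|^2
  have step1 : |G1fun θ φ| ≤ (L * |φ - θ|) * |φ - θ| := by
    have := Convex.norm_image_sub_le_of_norm_hasDerivWithin_le
      (f := G1fun θ) (f' := G2fun θ) (s := uIcc θ φ)
      (fun y hy => (G1fun_hasDerivAt θ (hJsub (hsub hy))).hasDerivWithinAt)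
      (fun y hy => by
        rw [Real.norm_eq_abs]
        exact le_trans (step0 y (hsub hy))
          (mul_le_mul_of_nonneg_left (abs_sub_of_mem_uIcc hy) hL0))
      (convex_uIcc θ φ) left_mem_uIcc right_mem_uIcc
    have hG1θ : G1fun θ θ = 0 := by simp [G1fun]
    rw [hG1θ, sub_zero, Real.norm_eq_abs, Real.norm_eq_abs] at this
    exact this
  -- step 2 : |G| ≤ L |φ-θ|^3
  have step2 : |Gfun θ φ| ≤ (L * |φ - θ|^2) * |φ - θ| := by
    have := Convex.norm_image_sub_le_of_norm_hasDerivWithin_le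
      (f := Gfun θ) (f' := G1fun θ) (s := uIcc θ φ)
      (fun y hy => (Gfun_hasDerivAt θ (hJsub (hsub hy))).hasDerivWithinAt)
      (fun y hy => by
        rw [Real.norm_eq_abs]
        have hsub2 : uIcc θ y ⊆ uIcc θ φ := uIcc_subset_uIcc left_mem_uIcc hy
        have h1 : |G1fun θ y| ≤ (L * |y - θ|) * |y - θ| := by
          have := Convex.norm_image_sub_le_of_norm_hasDerivWithin_le
            (f := G1fun θ) (f' := G2fun θ) (s := uIcc θ y)
            (fun z hz => (G1fun_hasDerivAt θ (hJsub (hsub (hsub2 hz)))).hasDerivWithinAt)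
            (fun z hz => by
              rw [Real.norm_eq_abs]
              exact le_trans (step0 z (hsub (hsub2 hz)))
                (mul_le_mul_of_nonneg_left (abs_sub_of_mem_uIcc hz) hL0))
            (convex_uIcc θ y) left_mem_uIcc right_mem_uIcc
          have hG1θ : G1fun θ θ = 0 := by simp [G1fun]
          rw [hG1θ, sub_zero, Real.norm_eq_abs, Real.norm_eq_abs] at this
          exact this
        have h2 : |y - θ| ≤ |φ - θ| := abs_sub_of_mem_uIcc hy
        have h3 : |y - θ| * |y - θ| ≤ |φ - θ| * |φ - θ| :=
          mul_le_mul h2 h2 (abs_nonneg _) (abs_nonneg _)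
        calc |G1fun θ y| ≤ (L * |y - θ|) * |y - θ| := h1
          _ = L * (|y - θ| * |y - θ|) := by ring
          _ ≤ L * (|φ - θ| * |φ - θ|) := mul_le_mul_of_nonneg_left h3 hL0
          _ = L * |φ - θ|^2 := by ring
        )
      (convex_uIcc θ φ) left_mem_uIcc right_mem_uIcc
    have hGθ : Gfun θ θ = 0 := by simp [Gfun]
    rw [hGθ, sub_zero, Real.norm_eq_abs, Real.norm_eq_abs] at this
    exact this
  calc |Gfun θ φ| ≤ (L * |φ - θ|^2) * |φ - θ| := step2
    _ ≤ (L + 1) * |φ - θ|^3 := by nlinarith [abs_nonneg (φ - θ), pow_nonneg (abs_nonneg (φ - θ)) 3]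

end main

section main2
variable (θ : ℝ)

lemma lg_continuousOn : ContinuousOn (fun y => Real.log (Real.Gamma y)) (Ioi 0) :=
  logGamma_contDiffOn.continuousOn

lemma digamma_le_log {x : ℝ} (hx : 0 < x) : digamma x ≤ Real.log x := by
  obtain ⟨ζ, hζ, hζ2⟩ := exists_hasDerivAt_eq_slope (fun y => Real.log (Real.Gamma y)) digamma
    (by linarith : x < x + 1)
    (lg_continuousOn.mono (fun y hy => lt_of_lt_of_le hx hy.1))
    (fun y hy => lg_hasDerivAt (hx.trans hy.1))
  have h1 : digamma ζ = Real.log x := by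
    rw [hζ2, lg_add_one hx]
    field_simp
    ring
  calc digamma x ≤ digamma ζ := digamma_monotoneOn (mem_Ioi.2 hx)
        (mem_Ioi.2 (hx.trans hζ.1)) hζ.1.le
    _ = Real.log x := h1

lemma regime_large (hθ : 0 < θ) :
    ∃ A : ℝ, 0 < A ∧ ∀ φ, 2*θ + 2 < φ → |Gfun θ φ| ≤ A * |φ - θ|^3 := by
  refine ⟨2 + |digamma θ| + |deriv digamma θ|, by positivity, fun φ hφ => ?_⟩
  have hφ0 : 0 < φ := by linarith
  have hθφ : θ < φ := by linarith
  obtain ⟨ξ, hξ, hξ2⟩ := exists_hasDerivAt_eq_slope (fun y => Real.log (Real.Gamma y)) digamma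
    hθφ (lg_continuousOn.mono (fun y hy => lt_of_lt_of_le hθ hy.1))
    (fun y hy => lg_hasDerivAt (hθ.trans hy.1))
  have hξ0 : 0 < ξ := hθ.trans hξ.1
  have hlg : Real.log (Real.Gamma φ) - Real.log (Real.Gamma θ) = digamma ξ * (φ - θ) := by
    rw [hξ2]
    exact (div_mul_cancel₀ _ (ne_of_gt (by linarith : (0:ℝ) < φ - θ))).symm
  have hub : digamma ξ ≤ φ := by
    calc digamma ξ ≤ digamma φ := digamma_monotoneOn (mem_Ioi.2 hξ0) (mem_Ioi.2 hφ0) hξ.2.le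
      _ ≤ Real.log φ := digamma_le_log hφ0
      _ ≤ φ := by linarith [Real.log_le_sub_one_of_pos hφ0]
  have hlb : -|digamma θ| ≤ digamma ξ := by
    calc -|digamma θ| ≤ digamma θ := neg_abs_le _
      _ ≤ digamma ξ := digamma_monotoneOn (mem_Ioi.2 hθ) (mem_Ioi.2 hξ0) hξ.1.le
  have habs : |digamma ξ| ≤ |digamma θ| + φ := by
    rw [abs_le]
    exact ⟨by linarith, by linarith [abs_nonneg (digamma θ)]⟩
  have habsφθ : |φ - θ| = φ - θ := abs_of_pos (by linarith)
  have hG : Gfun θ φ = (Real.log (Real.Gamma φ) - Real.log (Real.Gamma θ))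
      + (θ - φ) * digamma θ + -(1/2 * (φ - θ)^2 * deriv digamma θ) := by
    simp only [Gfun]; ring
  have h1 : |Real.log (Real.Gamma φ) - Real.log (Real.Gamma θ)| ≤ (|digamma θ| + φ) * (φ - θ) := by
    rw [hlg, abs_mul, habsφθ]
    exact mul_le_mul_of_nonneg_right habs (by linarith)
  have e2 : |(θ - φ) * digamma θ| = (φ - θ) * |digamma θ| := by
    rw [abs_mul, abs_sub_comm, habsφθ]
  have e3 : |1/2 * (φ - θ)^2 * deriv digamma θ| = 1/2 * (φ - θ)^2 * |deriv digamma θ| := by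
    rw [abs_mul, abs_mul, abs_pow, habsφθ]
    norm_num
  have htri : |Gfun θ φ| ≤ (|digamma θ| + φ) * (φ - θ) + (φ - θ) * |digamma θ|
      + 1/2 * (φ - θ)^2 * |deriv digamma θ| := by
    rw [hG]
    calc |Real.log (Real.Gamma φ) - Real.log (Real.Gamma θ) + (θ - φ) * digamma θ
          + -(1/2 * (φ - θ)^2 * deriv digamma θ)|
        ≤ |Real.log (Real.Gamma φ) - Real.log (Real.Gamma θ) + (θ - φ) * digamma θ|
          + |-(1/2 * (φ - θ)^2 * deriv digamma θ)| := abs_add_le _ _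
      _ ≤ |Real.log (Real.Gamma φ) - Real.log (Real.Gamma θ)| + |(θ - φ) * digamma θ|
          + |1/2 * (φ - θ)^2 * deriv digamma θ| := by
          rw [abs_neg]
          linarith [abs_add_le (Real.log (Real.Gamma φ) - Real.log (Real.Gamma θ))
            ((θ - φ) * digamma θ)]
      _ ≤ _ := by rw [e2, e3]; linarith
  rw [habsφθ]
  have hδ2 : (2:ℝ) ≤ φ - θ := by linarith
  have hφδ : φ ≤ 2 * (φ - θ) := by linarith
  have hp : (0:ℝ) ≤ |digamma θ| := abs_nonneg _
  have hq : (0:ℝ) ≤ |deriv digamma θ| := abs_nonneg _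
  nlinarith [htri, mul_nonneg hp (sq_nonneg (φ - θ)), mul_nonneg hq (sq_nonneg (φ - θ)),
    sq_nonneg (φ - θ), mul_le_mul_of_nonneg_left hδ2 (mul_nonneg hp (by linarith : (0:ℝ) ≤ φ - θ)),
    mul_le_mul_of_nonneg_left hδ2 (mul_nonneg hq (by linarith : (0:ℝ) ≤ φ - θ)),
    mul_le_mul_of_nonneg_left hδ2 (sq_nonneg (φ - θ))]

end main2

lemma regime_small {θ c : ℝ} (hθ : 0 < θ) (hc : 0 < c) (hcθ : c < θ) :
    ∃ A : ℝ, 0 < A ∧ ∀ φ, 0 < φ → φ < c →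
      |Gfun θ φ| ≤ A * |φ - θ|^3 + max (Real.log φ⁻¹) 0 := by
  obtain ⟨M, hM⟩ := (isCompact_Icc (a := (1:ℝ)) (b := 1 + c)).exists_bound_of_continuousOn
    (lg_continuousOn.mono (fun y hy => lt_of_lt_of_le zero_lt_one hy.1))
  have hM0 : 0 ≤ M := le_trans (norm_nonneg _) (hM 1 ⟨le_refl 1, by linarith⟩)
  set K : ℝ := M + max (Real.log c) 0 + θ * |digamma θ| + |Real.log (Real.Gamma θ)|
    + 1/2 * θ^2 * |deriv digamma θ| with hK
  have hK0 : 0 ≤ K := by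
    have := abs_nonneg (digamma θ)
    have := abs_nonneg (Real.log (Real.Gamma θ))
    have := abs_nonneg (deriv digamma θ)
    have := le_max_right (Real.log c) 0
    positivity
  refine ⟨(K + 1) / (θ - c)^3, div_pos (by linarith) (pow_pos (by linarith) 3), fun φ hφ0 hφc => ?_⟩
  -- bound |log Γ φ|
  have hrec : Real.log (Real.Gamma φ) = Real.log (Real.Gamma (φ + 1)) - Real.log φ := by
    rw [lg_add_one hφ0]; ring
  have h1 : |Real.log (Real.Gamma (φ + 1))| ≤ M := by
    have := hM (φ + 1) ⟨by linarith, by linarith⟩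
    simpa using this
  have h2 : |Real.log φ| ≤ max (Real.log φ⁻¹) 0 + max (Real.log c) 0 := by
    rcases le_or_gt φ 1 with h | h
    · have hlog : Real.log φ ≤ 0 := Real.log_nonpos hφ0.le h
      rw [abs_of_nonpos hlog]
      have : -Real.log φ = Real.log φ⁻¹ := (Real.log_inv φ).symm
      rw [this]
      exact le_add_of_le_of_nonneg (le_max_left _ _) (le_max_right _ _)
    · have hlog : 0 ≤ Real.log φ := Real.log_nonneg h.le
      rw [abs_of_nonneg hlog]
      have : Real.log φ ≤ Real.log c := Real.log_le_log (by linarith) hφc.le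
      calc Real.log φ ≤ max (Real.log c) 0 := le_trans this (le_max_left _ _)
        _ ≤ max (Real.log φ⁻¹) 0 + max (Real.log c) 0 := by
            linarith [le_max_right (Real.log φ⁻¹) 0]
  have hlgφ : |Real.log (Real.Gamma φ)| ≤ M + max (Real.log φ⁻¹) 0 + max (Real.log c) 0 := by
    rw [hrec]
    calc |Real.log (Real.Gamma (φ + 1)) - Real.log φ|
        ≤ |Real.log (Real.Gamma (φ + 1))| + |Real.log φ| := abs_sub _ _
      _ ≤ M + (max (Real.log φ⁻¹) 0 + max (Real.log c) 0) := add_le_add h1 h2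
      _ = _ := by ring
  -- crude bound on |G|
  have htri : |Gfun θ φ| ≤ |Real.log (Real.Gamma φ)| + (θ - φ) * |digamma θ|
      + |Real.log (Real.Gamma θ)| + 1/2 * (φ - θ)^2 * |deriv digamma θ| := by
    have e2 : |(θ - φ) * digamma θ| = (θ - φ) * |digamma θ| := by
      rw [abs_mul, abs_of_pos (by linarith : (0:ℝ) < θ - φ)]
    have e3 : |1/2 * (φ - θ)^2 * deriv digamma θ| = 1/2 * (φ - θ)^2 * |deriv digamma θ| := by
      rw [abs_mul, abs_mul, abs_pow, sq_abs]
      norm_num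
    have hG : Gfun θ φ = Real.log (Real.Gamma φ) + (θ - φ) * digamma θ
        + -(Real.log (Real.Gamma θ)) + -(1/2 * (φ - θ)^2 * deriv digamma θ) := by
      simp only [Gfun]; ring
    rw [hG]
    calc |Real.log (Real.Gamma φ) + (θ - φ) * digamma θ + -(Real.log (Real.Gamma θ))
          + -(1/2 * (φ - θ)^2 * deriv digamma θ)|
        ≤ |Real.log (Real.Gamma φ) + (θ - φ) * digamma θ + -(Real.log (Real.Gamma θ))|
          + |1/2 * (φ - θ)^2 * deriv digamma θ| := by
          rw [← abs_neg (1/2 * (φ - θ)^2 * deriv digamma θ)]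
          exact abs_add_le _ _
      _ ≤ |Real.log (Real.Gamma φ) + (θ - φ) * digamma θ| + |Real.log (Real.Gamma θ)|
          + |1/2 * (φ - θ)^2 * deriv digamma θ| := by
          rw [← abs_neg (Real.log (Real.Gamma θ))]
          linarith [abs_add_le (Real.log (Real.Gamma φ) + (θ - φ) * digamma θ)
            (-(Real.log (Real.Gamma θ))), abs_neg (Real.log (Real.Gamma θ))]
      _ ≤ _ := by
          rw [e3]
          linarith [abs_add_le (Real.log (Real.Gamma φ)) ((θ - φ) * digamma θ), e2]
  have hbound : |Gfun θ φ| ≤ K + max (Real.log φ⁻¹) 0 := by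
    have b1 : (θ - φ) * |digamma θ| ≤ θ * |digamma θ| :=
      mul_le_mul_of_nonneg_right (by linarith) (abs_nonneg _)
    have b2 : 1/2 * (φ - θ)^2 * |deriv digamma θ| ≤ 1/2 * θ^2 * |deriv digamma θ| := by
      have : (φ - θ)^2 ≤ θ^2 := by nlinarith
      nlinarith [abs_nonneg (deriv digamma θ)]
    calc |Gfun θ φ| ≤ _ := htri
      _ ≤ (M + max (Real.log φ⁻¹) 0 + max (Real.log c) 0) + θ * |digamma θ|
          + |Real.log (Real.Gamma θ)| + 1/2 * θ^2 * |deriv digamma θ| := by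
          linarith [hlgφ]
      _ = K + max (Real.log φ⁻¹) 0 := by rw [hK]; ring
  have hKA : K ≤ (K + 1) / (θ - c)^3 * |φ - θ|^3 := by
    have hd : θ - c ≤ |φ - θ| := by
      rw [abs_sub_comm, abs_of_pos (by linarith : (0:ℝ) < θ - φ)]
      linarith
    have hd3 : (θ - c)^3 ≤ |φ - θ|^3 := pow_le_pow_left₀ (by linarith) hd 3
    have h3pos : (0:ℝ) < (θ - c)^3 := pow_pos (by linarith) 3
    rw [div_mul_eq_mul_div, le_div_iff₀ h3pos]
    have := mul_le_mul_of_nonneg_left hd3 hK0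
    nlinarith [hK0, hd3, h3pos]
  linarith [hbound, hKA]

/-- for every `θ > 0` and `0 < c < θ` there is `A > 0` such that for all
`φ > 0`, `|I(θ,φ) − ½(φ−θ)² I(θ)| ≤ A|φ−θ|³ + (log φ⁻¹)⁺ 1(φ < c)`, where
`I(θ) = ψ'(θ)` is the Fisher information (trigamma). -/
theorem kl_quadratic_approximation (θ c : ℝ) (hθ : 0 < θ) (hc : 0 < c) (hcθ : c < θ) :
    ∃ A : ℝ, 0 < A ∧ ∀ φ : ℝ, 0 < φ →
      |klGamma θ φ - (1 / 2) * (φ - θ) ^ 2 * deriv digamma θ|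
        ≤ A * |φ - θ| ^ 3 + (if φ < c then max (Real.log φ⁻¹) 0 else 0) := by
  obtain ⟨A1, hA1, h1⟩ := regime_small hθ hc hcθ
  obtain ⟨A2, hA2, h2⟩ := regime_mid θ hθ hc hcθ
  obtain ⟨A3, hA3, h3⟩ := regime_large θ hθ
  refine ⟨A1 + A2 + A3, by linarith, fun φ hφ => ?_⟩
  have hGeq : klGamma θ φ - (1 / 2) * (φ - θ) ^ 2 * deriv digamma θ = Gfun θ φ := by
    simp only [klGamma, Gfun]
    ring
  rw [hGeq]
  have h3nn : 0 ≤ |φ - θ| ^ 3 := pow_nonneg (abs_nonneg _) 3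
  have hmono : A1 * |φ - θ| ^ 3 ≤ (A1 + A2 + A3) * |φ - θ| ^ 3 ∧
      A2 * |φ - θ| ^ 3 ≤ (A1 + A2 + A3) * |φ - θ| ^ 3 ∧
      A3 * |φ - θ| ^ 3 ≤ (A1 + A2 + A3) * |φ - θ| ^ 3 := by
    refine ⟨?_, ?_, ?_⟩ <;>
      nlinarith [mul_nonneg hA1.le h3nn, mul_nonneg hA2.le h3nn, mul_nonneg hA3.le h3nn]
  by_cases hsmall : φ < c
  · rw [if_pos hsmall]
    have := h1 φ hφ hsmall
    linarith [hmono.1]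
  · rw [if_neg hsmall]
    push_neg at hsmall
    rw [add_zero]
    by_cases hmid : φ ≤ 2 * θ + 2
    · have := h2 φ hsmall hmid
      linarith [hmono.2.1]
    · push_neg at hmid
      have := h3 φ hmid
      linarith [hmono.2.2]
end
end

section
/- For the Shiriyayev–Roberts–Robbins–Siegmund changepoint detection scheme based on the method-of-moments estimators, the average run length to false alarm satisfies E_∞ N_A ≥ A for all 0 < A < ∞. -/
/-!
Under `P_∞` each factor `f_{θ_{i,k}}(X_i) / f_{θ₀}(X_i)` has conditional mean one given
`X_1, …, X_{i-1}`: the estimate `θ_{i,k}` is a positive function of the past, and `X_i` is an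
independent `Gamma(θ₀,1)` variable, so integrating the density ratio against `f_{θ₀}` gives
`∫ f_θ = 1`. Hence `R_n - n` is a martingale with `R_0 = 0`, and on `{N_A > m}` one gets
`E[R_{m+1}; N_A > m] = P(N_A > m) + E[R_m; N_A > m]`. Since `R_{N_A} ≥ A`, summing these
identities (optional stopping) yields `A · P(N_A ≤ m) ≤ ∑_{j<m} P(N_A > j) ≤ E N_A`, and letting
`m → ∞` gives `E N_A ≥ A`, the case `P(N_A = ∞) > 0` being trivial.
-/

open MeasureTheory ProbabilityTheory Filter
open scoped ENNReal NNReal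

noncomputable section

@[fun_prop]
theorem Real.measurable_Gamma : Measurable Real.Gamma :=
  measurable_of_tendsto_metrizable (fun n => by unfold Real.GammaSeq; fun_prop)
    (tendsto_pi_nhds.2 Real.GammaSeq_tendsto_Gamma)

@[fun_prop]
theorem Measurable.gammaPDFReal {α : Type*} {mα : MeasurableSpace α} {f g : α → ℝ}
    (hf : Measurable f) (hg : Measurable g) (r : ℝ) :
    Measurable fun x => ProbabilityTheory.gammaPDFReal (f x) r (g x) := by
  unfold ProbabilityTheory.gammaPDFReal
  exact Measurable.ite (measurableSet_le measurable_const hg) (by fun_prop) measurable_const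

theorem ae_gammaMeasure_pos {a r : ℝ} : ∀ᵐ x ∂gammaMeasure a r, 0 < x := by
  rw [gammaMeasure,
    ae_withDensity_iff (f := gammaPDF a r) (measurable_gammaPDFReal a r).ennreal_ofReal]
  filter_upwards [volume.ae_ne 0] with x hx0 hx
  contrapose! hx
  exact gammaPDF_of_neg (lt_of_le_of_ne hx hx0)

theorem lintegral_gammaPDFReal_div {a b r : ℝ} (ha : 0 < a) (hb : 0 < b) (hr : 0 < r) :
    ∫⁻ x, ENNReal.ofReal (gammaPDFReal a r x / gammaPDFReal b r x) ∂gammaMeasure b r = 1 := by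
  rw [gammaMeasure, lintegral_withDensity_eq_lintegral_mul (f := gammaPDF b r) _
    (measurable_gammaPDFReal b r).ennreal_ofReal (by fun_prop), ← lintegral_gammaPDF_eq_one ha hr]
  refine lintegral_congr_ae ?_
  filter_upwards [volume.ae_ne 0] with x hx0
  rcases hx0.lt_or_gt with hx | hx
  · simp [gammaPDF_of_neg hx]
  · have hb' := gammaPDFReal_pos hb hr hx
    rw [Pi.mul_apply, gammaPDF, gammaPDF, ← ENNReal.ofReal_mul hb'.le, mul_div_cancel₀ _ hb'.ne']

theorem ae_pos_of_map_eq_gammaMeasure {Ω : Type*} [MeasurableSpace Ω] {P : Measure Ω} {Z : Ω → ℝ}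
    (hZ : AEMeasurable Z P) {a r : ℝ} (hlaw : P.map Z = gammaMeasure a r) :
    ∀ᵐ ω ∂P, 0 < Z ω :=
  ae_of_ae_map hZ (hlaw ▸ ae_gammaMeasure_pos)

section

variable {Ω : Type*}

theorem ProbabilityTheory.IndepFun.lintegral_comp_eq_lintegral_lintegral_map
    [MeasurableSpace Ω] {P : Measure Ω} [IsFiniteMeasure P] {β γ : Type*} [MeasurableSpace β]
    [MeasurableSpace γ] {W : Ω → β} {Z : Ω → γ} (hWZ : IndepFun W Z P) (hW : Measurable W)
    (hZ : Measurable Z) {g : β × γ → ℝ≥0∞} (hg : Measurable g) :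
    ∫⁻ ω, g (W ω, Z ω) ∂P = ∫⁻ ω, ∫⁻ z, g (W ω, z) ∂(P.map Z) ∂P := by
  rw [← lintegral_map hg (hW.prodMk hZ),
    hWZ.map_prod_eq_prod_map_map hW.aemeasurable hZ.aemeasurable,
    lintegral_prod _ hg.aemeasurable, lintegral_map hg.lintegral_prod_right' hW]

theorem lintegral_mul_gammaPDFReal_div_of_indep {F mΩ : MeasurableSpace Ω} {P : Measure Ω}
    [IsFiniteMeasure P] (hF : F ≤ mΩ) {Z : Ω → ℝ} (hZ : Measurable Z)
    (hindep : Indep F (MeasurableSpace.comap Z inferInstance) P) {b r : ℝ} (hb : 0 < b)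
    (hr : 0 < r) (hlaw : P.map Z = gammaMeasure b r) {Y : Ω → ℝ≥0∞} (hY : Measurable[F] Y)
    {Θ : Ω → ℝ} (hΘ : Measurable[F] Θ) (hΘ_pos : ∀ᵐ ω ∂P, 0 < Θ ω) :
    ∫⁻ ω, Y ω * ENNReal.ofReal (gammaPDFReal (Θ ω) r (Z ω) / gammaPDFReal b r (Z ω)) ∂P
      = ∫⁻ ω, Y ω ∂P := by
  have hW : Measurable[F] fun ω => (Y ω, Θ ω) := hY.prodMk hΘ
  have hWZ : IndepFun (fun ω => (Y ω, Θ ω)) Z P :=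
    (IndepFun_iff_Indep _ _ _).2 (indep_of_indep_of_le_left hindep hW.comap_le)
  have hg : Measurable fun p : (ℝ≥0∞ × ℝ) × ℝ =>
      p.1.1 * ENNReal.ofReal (gammaPDFReal p.1.2 r p.2 / gammaPDFReal b r p.2) := by
    fun_prop
  rw [hWZ.lintegral_comp_eq_lintegral_lintegral_map (hW.mono hF le_rfl) hZ hg, hlaw]
  refine lintegral_congr_ae (hΘ_pos.mono fun ω hω => ?_)
  dsimp only
  rw [lintegral_const_mul _ (by fun_prop), lintegral_gammaPDFReal_div hω hb hr, mul_one]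

abbrev pastMeasurableSpace {β : Type*} [mβ : MeasurableSpace β] (X : ℕ → Ω → β) (n : ℕ) :
    MeasurableSpace Ω :=
  ⨆ j < n, mβ.comap (X j)

section Past
variable {β : Type*} [mβ : MeasurableSpace β] {X : ℕ → Ω → β}

theorem pastMeasurableSpace_mono : Monotone (pastMeasurableSpace X) :=
  fun _ _ hmn => iSup₂_mono' fun j hj => ⟨j, hj.trans_le hmn, le_rfl⟩

theorem pastMeasurableSpace_le [mΩ : MeasurableSpace Ω] (hX : ∀ i, Measurable (X i)) (n : ℕ) :
    pastMeasurableSpace X n ≤ mΩ :=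
  iSup₂_le fun j _ => (hX j).comap_le

theorem measurable_pastMeasurableSpace {j n : ℕ} (hj : j < n) :
    Measurable[pastMeasurableSpace X n] (X j) :=
  (comap_measurable (X j)).mono (le_iSup₂ (f := fun j (_ : j < n) => mβ.comap (X j)) j hj) le_rfl

theorem ProbabilityTheory.iIndepFun.indep_pastMeasurableSpace [MeasurableSpace Ω]
    {P : Measure Ω} (hindep : iIndepFun X P) (hX : ∀ i, Measurable (X i)) (n : ℕ) :
    Indep (pastMeasurableSpace X n) (mβ.comap (X n)) P := by
  simpa [pastMeasurableSpace] using indep_iSup_of_disjoint (fun i => (hX i).comap_le)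
    hindep.iIndep (S := Set.Iio n) (T := {n}) (by simp)

end Past

def firstPassage (R : ℕ → Ω → ℝ) (A : ℝ) (ω : Ω) : ℝ≥0∞ :=
  ⨅ n ∈ {n : ℕ | 1 ≤ n ∧ A ≤ R n ω}, (n : ℝ≥0∞)

section FirstPassage
variable {R : ℕ → Ω → ℝ} {A : ℝ} {ω : Ω} {m : ℕ}

theorem add_one_le_firstPassage (h : ∀ j, 1 ≤ j → j ≤ m → R j ω < A) :
    ((m + 1 : ℕ) : ℝ≥0∞) ≤ firstPassage R A ω :=
  le_iInf₂ fun n hn => Nat.cast_le.2 (not_le.1 fun hnm => (h n hn.1 hnm).not_ge hn.2)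

theorem natCast_lt_firstPassage_iff :
    (m : ℝ≥0∞) < firstPassage R A ω ↔ ∀ j, 1 ≤ j → j ≤ m → R j ω < A := by
  refine ⟨fun h j hj hjm => not_le.1 fun hAj => h.not_ge ?_,
    fun h => lt_of_lt_of_le ?_ (add_one_le_firstPassage h)⟩
  · exact (iInf₂_le j ⟨hj, hAj⟩).trans (Nat.cast_le.2 hjm)
  · exact_mod_cast m.lt_succ_self

theorem add_one_le_firstPassage_of_lt (h : (m : ℝ≥0∞) < firstPassage R A ω) :
    ((m + 1 : ℕ) : ℝ≥0∞) ≤ firstPassage R A ω :=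
  add_one_le_firstPassage (natCast_lt_firstPassage_iff.1 h)

theorem le_apply_of_firstPassage_eq_succ (h : firstPassage R A ω = (m + 1 : ℕ)) :
    A ≤ R (m + 1) ω := by
  have hm : (m : ℝ≥0∞) < firstPassage R A ω := by rw [h]; exact_mod_cast m.lt_succ_self
  refine not_lt.1 fun hlt => ?_
  have hsucc := natCast_lt_firstPassage_iff.2 fun j hj hjm => by
    rcases Nat.lt_or_eq_of_le hjm with hjm | rfl
    · exact natCast_lt_firstPassage_iff.1 hm j hj (Nat.lt_succ_iff.1 hjm)
    · exact hlt
  exact hsucc.ne h.symm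

theorem measurableSet_natCast_lt_firstPassage {F : MeasurableSpace Ω}
    (hR : ∀ j ≤ m, Measurable[F] (R j)) :
    MeasurableSet[F] {ω | (m : ℝ≥0∞) < firstPassage R A ω} := by
  simp_rw [natCast_lt_firstPassage_iff, Set.ofPred_forall]
  exact .iInter fun j => .iInter fun _ => .iInter fun hj =>
    measurableSet_lt (hR j hj) measurable_const

theorem measurable_firstPassage [MeasurableSpace Ω] (hR : ∀ n, Measurable (R n)) :
    Measurable (firstPassage R A) := by
  classical
  refine Measurable.iInf fun n => ?_
  simp only [Set.mem_ofPred_eq, iInf_eq_if]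
  exact Measurable.ite (MeasurableSet.const _ |>.inter (measurableSet_le measurable_const (hR n)))
    measurable_const measurable_const

end FirstPassage

section Integral
variable [MeasurableSpace Ω] {P : Measure Ω}

theorem sum_measure_natCast_lt_le_lintegral {T : Ω → ℝ≥0∞} (hT : Measurable T)
    (hT_nat : ∀ ω (m : ℕ), (m : ℝ≥0∞) < T ω → ((m + 1 : ℕ) : ℝ≥0∞) ≤ T ω) (m : ℕ) :
    ∑ j ∈ Finset.range m, P {ω | (j : ℝ≥0∞) < T ω} ≤ ∫⁻ ω, T ω ∂P := by
  have hS : ∀ j : ℕ, MeasurableSet {ω | (j : ℝ≥0∞) < T ω} := fun j =>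
    measurableSet_lt measurable_const hT
  have hpt : ∀ ω, ∑ j ∈ Finset.range m, {ω | (j : ℝ≥0∞) < T ω}.indicator 1 ω ≤ T ω := by
    intro ω
    induction m with
    | zero => simp
    | succ m ih =>
      by_cases h : (m : ℝ≥0∞) < T ω
      · calc ∑ j ∈ Finset.range (m + 1), {ω | (j : ℝ≥0∞) < T ω}.indicator 1 ω
            = ∑ j ∈ Finset.range (m + 1), (1 : ℝ≥0∞) :=
              Finset.sum_congr rfl fun j hj => Set.indicator_of_mem (s := {ω | (j : ℝ≥0∞) < T ω})
                ((Nat.cast_le.2 (Nat.lt_succ_iff.1 (Finset.mem_range.1 hj))).trans_lt h) _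
          _ = ((m + 1 : ℕ) : ℝ≥0∞) := by simp
          _ ≤ T ω := hT_nat ω m h
      · rw [Finset.sum_range_succ, Set.indicator_of_notMem (s := {ω | (m : ℝ≥0∞) < T ω}) h,
          add_zero]
        exact ih
  calc ∑ j ∈ Finset.range m, P {ω | (j : ℝ≥0∞) < T ω}
      = ∫⁻ ω, ∑ j ∈ Finset.range m, {ω | (j : ℝ≥0∞) < T ω}.indicator 1 ω ∂P := by
        rw [lintegral_finsetSum _ fun j _ => measurable_one.indicator (hS j)]
        simp_rw [lintegral_indicator_one (hS _)]
    _ ≤ ∫⁻ ω, T ω ∂P := lintegral_mono hpt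

theorem le_lintegral_of_forall_mul_measure_le [IsProbabilityMeasure P] {T : Ω → ℝ≥0∞}
    (hT : Measurable T) {a : ℝ≥0∞} (h : ∀ m : ℕ, a * P {ω | T ω ≤ m} ≤ ∫⁻ ω, T ω ∂P) :
    a ≤ ∫⁻ ω, T ω ∂P := by
  by_cases hinf : P {ω | ⊤ ≤ T ω} = 0
  · have hfin : P {ω | T ω < ⊤} = 1 := by
      have hc : {ω | T ω < ⊤} = {ω | ⊤ ≤ T ω}ᶜ := by ext; simp [lt_top_iff_ne_top]
      rw [hc, prob_compl_eq_one_sub (measurableSet_le measurable_const hT), hinf, tsub_zero]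
    have hU : {ω | T ω < ⊤} = ⋃ m : ℕ, {ω | T ω ≤ m} := by
      ext ω
      simpa using ⟨fun h => (ENNReal.exists_nat_gt h.ne).imp fun _ => le_of_lt,
        fun ⟨m, hm⟩ => hm.trans_lt (ENNReal.natCast_lt_top m)⟩
    calc a = a * P {ω | T ω < ⊤} := by rw [hfin, mul_one]
      _ = ⨆ m : ℕ, a * P {ω | T ω ≤ m} := by
        rw [hU, Monotone.measure_iUnion fun m n hmn =>
            Set.ofPred_subset_ofPred.2 fun ω hω => hω.trans (Nat.cast_le.2 hmn),
          ENNReal.mul_iSup]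
      _ ≤ ∫⁻ ω, T ω ∂P := iSup_le h
  · calc a ≤ ⊤ * P {ω | ⊤ ≤ T ω} := by rw [ENNReal.top_mul hinf]; exact le_top
      _ ≤ ∫⁻ ω, T ω ∂P := mul_meas_ge_le_lintegral hT ⊤

end Integral

section Passage
variable [MeasurableSpace Ω] {P : Measure Ω} {R : ℕ → Ω → ℝ} {A : ℝ}

theorem setLIntegral_lt_firstPassage_succ_add_le (hR : ∀ n, Measurable (R n)) (m : ℕ) :
    ∫⁻ ω in {ω | ((m + 1 : ℕ) : ℝ≥0∞) < firstPassage R A ω}, ENNReal.ofReal (R (m + 1) ω) ∂P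
        + ENNReal.ofReal A * P {ω | firstPassage R A ω ≤ (m + 1 : ℕ)}
      ≤ ∫⁻ ω in {ω | (m : ℝ≥0∞) < firstPassage R A ω}, ENNReal.ofReal (R (m + 1) ω) ∂P
        + ENNReal.ofReal A * P {ω | firstPassage R A ω ≤ m} := by
  have hN := measurable_firstPassage (A := A) hR
  have hf : Measurable fun ω => ENNReal.ofReal (R (m + 1) ω) := (hR (m + 1)).ennreal_ofReal
  simp_rw [← lintegral_indicator (measurableSet_lt measurable_const hN),
    ← lintegral_indicator_const (measurableSet_le hN measurable_const),
    ← lintegral_add_left (hf.indicator (measurableSet_lt measurable_const hN))]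
  refine lintegral_mono fun ω => ?_
  by_cases h₁ : ((m + 1 : ℕ) : ℝ≥0∞) < firstPassage R A ω
  · have h₀ : (m : ℝ≥0∞) < firstPassage R A ω := lt_trans (by exact_mod_cast m.lt_succ_self) h₁
    simp only [Set.indicator_apply, Set.mem_ofPred_eq, h₁, h₀, h₁.not_ge, h₀.not_ge]
    simp
  by_cases h₀ : (m : ℝ≥0∞) < firstPassage R A ω
  · simp only [Set.indicator_apply, Set.mem_ofPred_eq, h₁, h₀, h₀.not_ge, not_lt.1 h₁]
    simpa using ENNReal.ofReal_le_ofReal (le_apply_of_firstPassage_eq_succ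
      (le_antisymm (not_lt.1 h₁) (add_one_le_firstPassage_of_lt h₀)))
  · simp only [Set.indicator_apply, Set.mem_ofPred_eq, h₁, h₀, not_lt.1 h₁, not_lt.1 h₀]
    simp

theorem le_lintegral_firstPassage [IsProbabilityMeasure P] (hR : ∀ n, Measurable (R n))
    (hR₀ : ∀ ω, R 0 ω = 0)
    (hstep : ∀ m : ℕ,
      ∫⁻ ω in {ω | (m : ℝ≥0∞) < firstPassage R A ω}, ENNReal.ofReal (R (m + 1) ω) ∂P
        ≤ P {ω | (m : ℝ≥0∞) < firstPassage R A ω}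
          + ∫⁻ ω in {ω | (m : ℝ≥0∞) < firstPassage R A ω}, ENNReal.ofReal (R m ω) ∂P) :
    ENNReal.ofReal A ≤ ∫⁻ ω, firstPassage R A ω ∂P := by
  have hN := measurable_firstPassage (A := A) hR
  have key : ∀ m : ℕ,
      ∫⁻ ω in {ω | (m : ℝ≥0∞) < firstPassage R A ω}, ENNReal.ofReal (R m ω) ∂P
        + ENNReal.ofReal A * P {ω | firstPassage R A ω ≤ m}
      ≤ ∑ j ∈ Finset.range m, P {ω | (j : ℝ≥0∞) < firstPassage R A ω} := by
    intro m
    induction m with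
    | zero =>
      have hpos : {ω | firstPassage R A ω ≤ ((0 : ℕ) : ℝ≥0∞)} = ∅ :=
        Set.eq_empty_of_forall_notMem fun ω =>
          not_le.2 (natCast_lt_firstPassage_iff.2 fun j hj hj0 => absurd hj (by omega))
      rw [hpos]
      simp [hR₀]
    | succ m ih =>
      calc _ ≤ ∫⁻ ω in {ω | (m : ℝ≥0∞) < firstPassage R A ω}, ENNReal.ofReal (R (m + 1) ω) ∂P
              + ENNReal.ofReal A * P {ω | firstPassage R A ω ≤ m} :=
            setLIntegral_lt_firstPassage_succ_add_le hR m
        _ ≤ P {ω | (m : ℝ≥0∞) < firstPassage R A ω}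
              + (∫⁻ ω in {ω | (m : ℝ≥0∞) < firstPassage R A ω}, ENNReal.ofReal (R m ω) ∂P
                + ENNReal.ofReal A * P {ω | firstPassage R A ω ≤ m}) := by
            rw [← add_assoc]; gcongr; exact hstep m
        _ ≤ _ := by rw [Finset.sum_range_succ, add_comm]; gcongr
  refine le_lintegral_of_forall_mul_measure_le hN fun m => le_add_self.trans ((key m).trans ?_)
  exact sum_measure_natCast_lt_le_lintegral hN (fun ω m => add_one_le_firstPassage_of_lt) m

end Passage

/-- `lrProduct θ₀ θ X k n` is the paper's `Λ_{n,k}`, with `θ k i` in place of `θ_{i,k}`. -/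
def lrProduct (θ₀ : ℝ) (θ : ℕ → ℕ → Ω → ℝ) (X : ℕ → Ω → ℝ) (k n : ℕ) (ω : Ω) : ℝ :=
  ∏ i ∈ Finset.Icc k n, gam (θ k i ω) (X i ω) / gam θ₀ (X i ω)

def shiryaevRoberts (θ₀ : ℝ) (θ : ℕ → ℕ → Ω → ℝ) (X : ℕ → Ω → ℝ) (n : ℕ) (ω : Ω) : ℝ :=
  ∑ k ∈ Finset.Icc 1 n, lrProduct θ₀ θ X k n ω

section ShiryaevRoberts
variable {θ₀ : ℝ} {θ : ℕ → ℕ → Ω → ℝ} {X : ℕ → Ω → ℝ} {k m n : ℕ} {ω : Ω}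

theorem lrProduct_nonneg (hθ₀ : 0 < θ₀) (hθ : ∀ i ∈ Finset.Icc k n, 0 < θ k i ω) :
    0 ≤ lrProduct θ₀ θ X k n ω :=
  Finset.prod_nonneg fun i hi =>
    div_nonneg (gammaPDFReal_nonneg (hθ i hi) one_pos _) (gammaPDFReal_nonneg hθ₀ one_pos _)

theorem lrProduct_succ (h : k ≤ n + 1) :
    lrProduct θ₀ θ X k (n + 1) ω
      = lrProduct θ₀ θ X k n ω * (gam (θ k (n + 1) ω) (X (n + 1) ω) / gam θ₀ (X (n + 1) ω)) :=
  Finset.prod_Icc_succ_top h _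

theorem lrProduct_of_lt (h : n < k) : lrProduct θ₀ θ X k n ω = 1 := by
  simp [lrProduct, Finset.Icc_eq_empty_of_lt h]

theorem measurable_lrProduct (hθ : ∀ k i, k ≤ i → Measurable[pastMeasurableSpace X i] (θ k i))
    (hn : n < m) : Measurable[pastMeasurableSpace X m] (lrProduct θ₀ θ X k n) := by
  refine Finset.measurable_prod _ fun i hi => ?_
  have him : i < m := (Finset.mem_Icc.1 hi).2.trans_lt hn
  have hθi := (hθ k i (Finset.mem_Icc.1 hi).1).mono (pastMeasurableSpace_mono him.le) le_rfl
  have hXi := measurable_pastMeasurableSpace (X := X) him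
  exact (hθi.gammaPDFReal hXi 1).div (measurable_const.gammaPDFReal hXi 1)

theorem measurable_shiryaevRoberts
    (hθ : ∀ k i, k ≤ i → Measurable[pastMeasurableSpace X i] (θ k i)) (hn : n < m) :
    Measurable[pastMeasurableSpace X m] (shiryaevRoberts θ₀ θ X n) :=
  Finset.measurable_sum _ fun _ _ => measurable_lrProduct hθ hn

variable [MeasurableSpace Ω] {P : Measure Ω}

theorem setLIntegral_lrProduct_succ [IsFiniteMeasure P] (hθ₀ : 0 < θ₀)
    (hX : ∀ i, Measurable (X i)) (hindep : iIndepFun X P)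
    (hlaw : P.map (X (m + 1)) = gammaMeasure θ₀ 1)
    (hθ : ∀ k i, k ≤ i → Measurable[pastMeasurableSpace X i] (θ k i))
    (hθ_pos : ∀ᵐ ω ∂P, ∀ k i, 1 ≤ k → k ≤ i → 0 < θ k i ω) (hk₁ : 1 ≤ k) (hk : k ≤ m + 1)
    {S : Set Ω} (hS : MeasurableSet[pastMeasurableSpace X (m + 1)] S) :
    ∫⁻ ω in S, ENNReal.ofReal (lrProduct θ₀ θ X k (m + 1) ω) ∂P
      = ∫⁻ ω in S, ENNReal.ofReal (lrProduct θ₀ θ X k m ω) ∂P := by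
  have hF := pastMeasurableSpace_le hX (m + 1)
  rw [← lintegral_indicator (hF _ hS), ← lintegral_indicator (hF _ hS),
    ← lintegral_mul_gammaPDFReal_div_of_indep hF (hX (m + 1))
      (hindep.indep_pastMeasurableSpace hX (m + 1)) hθ₀ one_pos hlaw
      ((measurable_lrProduct hθ m.lt_succ_self).ennreal_ofReal.indicator hS) (hθ k (m + 1) hk)
      (hθ_pos.mono fun ω h => h k (m + 1) hk₁ hk)]
  refine lintegral_congr_ae (hθ_pos.mono fun ω hω => ?_)
  dsimp only
  by_cases hωS : ω ∈ S
  · rw [Set.indicator_of_mem hωS, Set.indicator_of_mem hωS, lrProduct_succ hk, ENNReal.ofReal_mul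
      (lrProduct_nonneg hθ₀ fun i hi => hω k i hk₁ (Finset.mem_Icc.1 hi).1)]
    rfl
  · rw [Set.indicator_of_notMem hωS, Set.indicator_of_notMem hωS, zero_mul]

theorem setLIntegral_shiryaevRoberts_succ [IsFiniteMeasure P] (hθ₀ : 0 < θ₀)
    (hX : ∀ i, Measurable (X i)) (hindep : iIndepFun X P)
    (hlaw : P.map (X (m + 1)) = gammaMeasure θ₀ 1)
    (hθ : ∀ k i, k ≤ i → Measurable[pastMeasurableSpace X i] (θ k i))
    (hθ_pos : ∀ᵐ ω ∂P, ∀ k i, 1 ≤ k → k ≤ i → 0 < θ k i ω)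
    {S : Set Ω} (hS : MeasurableSet[pastMeasurableSpace X (m + 1)] S) :
    ∫⁻ ω in S, ENNReal.ofReal (shiryaevRoberts θ₀ θ X (m + 1) ω) ∂P
      = P S + ∫⁻ ω in S, ENNReal.ofReal (shiryaevRoberts θ₀ θ X m ω) ∂P := by
  have hsum : ∀ n, ∫⁻ ω in S, ENNReal.ofReal (shiryaevRoberts θ₀ θ X n ω) ∂P
      = ∑ k ∈ Finset.Icc 1 n, ∫⁻ ω in S, ENNReal.ofReal (lrProduct θ₀ θ X k n ω) ∂P := by
    intro n
    rw [← lintegral_finsetSum _ fun k _ => ((measurable_lrProduct hθ n.lt_succ_self).mono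
      (pastMeasurableSpace_le hX _) le_rfl).ennreal_ofReal]
    refine lintegral_congr_ae (ae_restrict_of_ae (hθ_pos.mono fun ω hω => ?_))
    exact ENNReal.ofReal_sum_of_nonneg fun k hk => lrProduct_nonneg hθ₀ fun i hi =>
      hω k i (Finset.mem_Icc.1 hk).1 (Finset.mem_Icc.1 hi).1
  have hlast : ∫⁻ ω in S, ENNReal.ofReal (lrProduct θ₀ θ X (m + 1) m ω) ∂P = P S := by
    simp [lrProduct_of_lt m.lt_succ_self]
  rw [hsum, Finset.sum_congr rfl fun k hk => setLIntegral_lrProduct_succ hθ₀ hX hindep hlaw hθ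
    hθ_pos (Finset.mem_Icc.1 hk).1 (Finset.mem_Icc.1 hk).2 hS, Finset.sum_Icc_succ_top (by omega),
    hlast, hsum, add_comm]

theorem le_lintegral_firstPassage_shiryaevRoberts [IsProbabilityMeasure P] (hθ₀ : 0 < θ₀)
    (hX : ∀ i, Measurable (X i)) (hindep : iIndepFun X P)
    (hlaw : ∀ i, 1 ≤ i → P.map (X i) = gammaMeasure θ₀ 1)
    (hθ : ∀ k i, k ≤ i → Measurable[pastMeasurableSpace X i] (θ k i))
    (hθ_pos : ∀ᵐ ω ∂P, ∀ k i, 1 ≤ k → k ≤ i → 0 < θ k i ω) (A : ℝ) :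
    ENNReal.ofReal A ≤ ∫⁻ ω, firstPassage (shiryaevRoberts θ₀ θ X) A ω ∂P :=
  le_lintegral_firstPassage
    (fun n => (measurable_shiryaevRoberts hθ n.lt_succ_self).mono (pastMeasurableSpace_le hX _)
      le_rfl)
    (fun ω => by simp [shiryaevRoberts])
    fun m => (setLIntegral_shiryaevRoberts_succ hθ₀ hX hindep (hlaw (m + 1) (by omega)) hθ hθ_pos
      (measurableSet_natCast_lt_firstPassage fun j hj =>
        measurable_shiryaevRoberts hθ (Nat.lt_succ_of_le hj))).le

end ShiryaevRoberts

def IsMomentEstimate (X : ℕ → Ω → ℝ) (c s t : ℝ) (θ : ℕ → ℕ → Ω → ℝ) : Prop :=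
  (∀ k ω, θ k k ω = c) ∧
    ∀ k n ω, k < n → θ k n ω = ((∑ i ∈ Finset.Ico k n, X i ω) + s) / (((n : ℝ) - (k : ℝ)) + t)

namespace IsMomentEstimate
variable {X : ℕ → Ω → ℝ} {c s t : ℝ} {θ : ℕ → ℕ → Ω → ℝ} {k n : ℕ}

theorem measurable (hθ : IsMomentEstimate X c s t θ) (hkn : k ≤ n) :
    Measurable[pastMeasurableSpace X n] (θ k n) := by
  rcases hkn.eq_or_lt with rfl | hlt
  · rw [funext (hθ.1 k)]
    exact measurable_const
  · rw [funext fun ω => hθ.2 k n ω hlt]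
    exact ((Finset.measurable_sum _ fun i hi =>
      measurable_pastMeasurableSpace (Finset.mem_Ico.1 hi).2).add_const s).div_const _

theorem pos (hθ : IsMomentEstimate X c s t θ) (hc : 0 < c) (hs : 0 ≤ s) (ht : 0 ≤ t) {ω : Ω}
    (hX : ∀ i, 1 ≤ i → 0 < X i ω) (hk : 1 ≤ k) (hkn : k ≤ n) : 0 < θ k n ω := by
  rcases hkn.eq_or_lt with rfl | hlt
  · rw [hθ.1]
    exact hc
  · rw [hθ.2 k n ω hlt]
    have hsum : 0 < ∑ i ∈ Finset.Ico k n, X i ω :=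
      Finset.sum_pos (fun i hi => hX i (hk.trans (Finset.mem_Ico.1 hi).1))
        ⟨k, Finset.mem_Ico.2 ⟨le_rfl, hlt⟩⟩
    have hlen : (k : ℝ) + 1 ≤ n := by exact_mod_cast hlt
    exact div_pos (by linarith) (by linarith)

end IsMomentEstimate

end

theorem srrs_arl_lower_bound_general
    {Ω : Type*} [MeasurableSpace Ω] (P : Measure Ω) [IsProbabilityMeasure P]
    (θ₀ : ℝ) (hθ₀ : 0 < θ₀)
    -- under P_∞ the observations are i.i.d. Gamma(θ₀,1)
    (X : ℕ → Ω → ℝ) (hXmeas : ∀ i, Measurable (X i))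
    (hindep : iIndepFun X P)
    (hlaw : ∀ i, 1 ≤ i → Measure.map (X i) P = gammaMeasure θ₀ 1)
    (s t : ℝ) (hs : 0 ≤ s) (ht : 0 ≤ t)
    -- θ_{n,k}: method-of-moments estimate from X_k,…,X_{n−1}
    (θnk : ℕ → ℕ → Ω → ℝ)
    (hθkk : ∀ k ω, θnk k k ω = if s = 0 ∨ t = 0 then θ₀ else s / t)
    (hθnk : ∀ k n ω, k < n →
      θnk k n ω = ((∑ i ∈ Finset.Ico k n, X i ω) + s) / (((n : ℝ) - (k : ℝ)) + t))
    (Λ : ℕ → ℕ → Ω → ℝ)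
    (hΛ : ∀ k n ω, Λ k n ω = ∏ i ∈ Finset.Icc k n, gam (θnk k i ω) (X i ω) / gam θ₀ (X i ω))
    (R : ℕ → Ω → ℝ) (hR : ∀ n ω, R n ω = ∑ k ∈ Finset.Icc 1 n, Λ k n ω)
    (A : ℝ)
    -- N_A ∈ [1,∞]: the first time n ≥ 1 that R_n ≥ A (∞ if no such n)
    (N : Ω → ℝ≥0∞)
    (hN : ∀ ω, N ω = ⨅ n ∈ {n : ℕ | 1 ≤ n ∧ A ≤ R n ω}, (n : ℝ≥0∞)) :
    ENNReal.ofReal A ≤ ∫⁻ ω, N ω ∂P := by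
  obtain rfl : Λ = lrProduct θ₀ θnk X := funext fun k => funext fun n => funext (hΛ k n)
  obtain rfl : R = shiryaevRoberts θ₀ θnk X := funext fun n => funext (hR n)
  obtain rfl : N = firstPassage (shiryaevRoberts θ₀ θnk X) A := funext hN
  have hθ : IsMomentEstimate X _ s t θnk := ⟨hθkk, hθnk⟩
  have hc : 0 < if s = 0 ∨ t = 0 then θ₀ else s / t := by
    split_ifs with h
    · exact hθ₀
    · rw [not_or] at h
      exact div_pos (hs.lt_of_ne' h.1) (ht.lt_of_ne' h.2)
  have hX_pos : ∀ᵐ ω ∂P, ∀ i, 1 ≤ i → 0 < X i ω := ae_all_iff.2 fun i =>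
    eventually_imp_distrib_left.2 fun hi =>
      ae_pos_of_map_eq_gammaMeasure (hXmeas i).aemeasurable (hlaw i hi)
  exact le_lintegral_firstPassage_shiryaevRoberts hθ₀ hXmeas hindep hlaw
    (fun _ _ => hθ.measurable) (hX_pos.mono fun ω hω _ _ hk hkn => hθ.pos hc hs ht hω hk hkn) A

/-- for the SRRS changepoint detection scheme based on the
method-of-moments estimators, the ARL to false alarm satisfies `E_∞ N_A ≥ A`
for all `0 < A < ∞`. -/
theorem srrs_arl_lower_bound
    {Ω : Type*} [MeasurableSpace Ω] (P : Measure Ω) [IsProbabilityMeasure P]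
    (θ₀ : ℝ) (hθ₀ : 0 < θ₀)
    -- under P_∞ the observations are i.i.d. Gamma(θ₀,1)
    (X : ℕ → Ω → ℝ) (hXmeas : ∀ i, Measurable (X i))
    (hindep : iIndepFun X P)
    (hlaw : ∀ i, 1 ≤ i → Measure.map (X i) P = gammaMeasure θ₀ 1)
    (s t : ℝ) (hs : 0 ≤ s) (ht : 0 ≤ t)
    -- θ_{n,k}: method-of-moments estimate from X_k,…,X_{n−1}
    (θnk : ℕ → ℕ → Ω → ℝ)
    (hθkk : ∀ k ω, θnk k k ω = if s = 0 ∨ t = 0 then θ₀ else s / t)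
    (hθnk : ∀ k n ω, k < n →
      θnk k n ω = ((∑ i ∈ Finset.Ico k n, X i ω) + s) / (((n : ℝ) - (k : ℝ)) + t))
    (Λ : ℕ → ℕ → Ω → ℝ)
    (hΛ : ∀ k n ω, Λ k n ω = ∏ i ∈ Finset.Icc k n, gam (θnk k i ω) (X i ω) / gam θ₀ (X i ω))
    (R : ℕ → Ω → ℝ) (hR : ∀ n ω, R n ω = ∑ k ∈ Finset.Icc 1 n, Λ k n ω)
    (A : ℝ) (hA : 0 < A)
    -- N_A ∈ [1,∞]: the first time n ≥ 1 that R_n ≥ A (∞ if no such n)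
    (N : Ω → ℝ≥0∞)
    (hN : ∀ ω, N ω = ⨅ n ∈ {n : ℕ | 1 ≤ n ∧ A ≤ R n ω}, (n : ℝ≥0∞)) :
    ENNReal.ofReal A ≤ ∫⁻ ω, N ω ∂P :=
  srrs_arl_lower_bound_general P θ₀ hθ₀ X hXmeas hindep hlaw s t hs ht θnk hθkk hθnk Λ hΛ R hR A N
    hN
end
end
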